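/- arXiv:2209.13440 — 5 statements merged into one kernel-verified Lean document; each statement's English description precedes it below -/
import Mathlib

section
/- Let Φ₁, Φ₂ : ℂⁿ → ℝ be real-quadratic weights with positive definite Levi matrices, and assume Φ₁(x) < Φ₂(x) for all x ∈ ℂⁿ \ {0}. Then every eigenvalue of the 2n×2n matrix 𝐀_{Φ₂}⁻¹𝐀_{Φ₁} is a positive real number different from 1, i.e. the spectrum is contained in (0,1) ∪ (1,+∞). -/
open MeasureTheory Real Matrix
open scoped ENNReal ComplexOrder

noncomputable section

/-- Bilinear dot product on ℂⁿ. -/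
def dotC {n : ℕ} (x y : Fin n → ℂ) : ℂ := ∑ j, x j * y j

/-- The real-quadratic weight Φ(x) = (1/2)(L x·x̄ + Re(P x·x)). -/
def weight {n : ℕ} (L P : Matrix (Fin n) (Fin n) ℂ) (x : Fin n → ℂ) : ℝ :=
  (1 / 2) * ((dotC (L.mulVec x) (star x)).re + (dotC (P.mulVec x) x).re)

/-- Squared H_Φ norm, valued in [0,∞]. -/
def HPhiNormSq {n : ℕ} (Φ : (Fin n → ℂ) → ℝ) (f : (Fin n → ℂ) → ℂ) : ℝ≥0∞ :=
  ∫⁻ x, ENNReal.ofReal (‖f x‖ ^ 2 * Real.exp (-4 * π * Φ x))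

/-- H_Φ norm, valued in [0,∞]. -/
def HPhiNorm {n : ℕ} (Φ : (Fin n → ℂ) → ℝ) (f : (Fin n → ℂ) → ℂ) : ℝ≥0∞ :=
  HPhiNormSq Φ f ^ (1 / 2 : ℝ)

/-- Entrywise complex conjugate of a matrix. -/
def conjM {m : Type*} (M : Matrix m m ℂ) : Matrix m m ℂ := M.map (starRingEnd ℂ)

/-- The matrix 𝐀_Φ associated with the weight with Levi matrix L and pluriharmonic part P. -/
def Amat {n : ℕ} (L P : Matrix (Fin n) (Fin n) ℂ) :
    Matrix (Fin n ⊕ Fin n) (Fin n ⊕ Fin n) ℂ :=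
  Matrix.fromBlocks (-(conjM L⁻¹ * P)) (Complex.I • conjM L⁻¹)
    (Complex.I • (L - conjM (P * L⁻¹) * P)) (-(conjM (P * L⁻¹)))

/-- Norm of the embedding H_{Φ₁} → H_{Φ₂}. -/
def embedNorm {n : ℕ} (Φ₁ Φ₂ : (Fin n → ℂ) → ℝ) : ℝ≥0∞ :=
  ⨆ f : {f : (Fin n → ℂ) → ℂ //
      Differentiable ℂ f ∧ 0 < HPhiNorm Φ₁ f ∧ HPhiNorm Φ₁ f ≠ ⊤},
    HPhiNorm Φ₂ f.1 / HPhiNorm Φ₁ f.1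

/-- The complex symplectic form on ℂ^{2n}. -/
def symp {n : ℕ} (X Y : Fin n ⊕ Fin n → ℂ) : ℂ :=
  ∑ j, X (Sum.inr j) * Y (Sum.inl j) - ∑ j, Y (Sum.inr j) * X (Sum.inl j)

/-- The phase-space shift S_Y. -/
def shiftOp {n : ℕ} (Y : (Fin n → ℂ) × (Fin n → ℂ)) (f : (Fin n → ℂ) → ℂ)
    (x : Fin n → ℂ) : ℂ :=
  Complex.exp (2 * (π : ℂ) * Complex.I * (-(1 / 2) * dotC Y.1 Y.2 + dotC Y.2 x)) * f (x - Y.1)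



namespace SpecAux
set_option linter.unusedSectionVars false

variable {n : ℕ}

@[simp] lemma conjM_apply {m : Type*} (M : Matrix m m ℂ) (i j : m) :
    conjM M i j = starRingEnd ℂ (M i j) := rfl

lemma conjM_mul {m : Type*} [Fintype m] (X Y : Matrix m m ℂ) :
    conjM (X * Y) = conjM X * conjM Y := by
  ext i j
  simp [conjM, Matrix.mul_apply, map_sum]

@[simp] lemma conjM_one {m : Type*} [DecidableEq m] : conjM (1 : Matrix m m ℂ) = 1 := by
  ext i j
  simp [conjM, Matrix.one_apply, apply_ite]

@[simp] lemma conjM_conjM {m : Type*} (X : Matrix m m ℂ) : conjM (conjM X) = X := by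
  ext i j; simp [conjM]

lemma conjM_smul {m : Type*} (c : ℂ) (X : Matrix m m ℂ) :
    conjM (c • X) = (starRingEnd ℂ c) • conjM X := by
  ext i j; simp [conjM]

lemma conjM_neg {m : Type*} (X : Matrix m m ℂ) : conjM (-X) = -conjM X := by
  ext i j; simp [conjM]

lemma conjM_sub {m : Type*} (X Y : Matrix m m ℂ) : conjM (X - Y) = conjM X - conjM Y := by
  ext i j; simp [conjM]

lemma conjM_transpose {m : Type*} (X : Matrix m m ℂ) : conjM (Xᵀ) = (conjM X)ᵀ := by
  ext i j; simp [conjM]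

lemma conjM_fromBlocks (A B C D : Matrix (Fin n) (Fin n) ℂ) :
    conjM (Matrix.fromBlocks A B C D) =
      Matrix.fromBlocks (conjM A) (conjM B) (conjM C) (conjM D) := by
  ext i j
  cases i <;> cases j <;> simp [conjM, Matrix.fromBlocks]

lemma conjTranspose_eq_conjM_transpose {m : Type*} (M : Matrix m m ℂ) :
    Mᴴ = (conjM M)ᵀ := by
  ext i j; simp [conjM, Matrix.conjTranspose_apply]

/-- the standard symplectic matrix -/
def SpM (n : ℕ) : Matrix (Fin n ⊕ Fin n) (Fin n ⊕ Fin n) ℂ :=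
  Matrix.fromBlocks 0 (-1) 1 0

/-- the Hermitian matrix W_Φ with Sp ⬝ A_Φ = i W_Φ -/
def Wm (L P : Matrix (Fin n) (Fin n) ℂ) : Matrix (Fin n ⊕ Fin n) (Fin n ⊕ Fin n) ℂ :=
  Matrix.fromBlocks (-(L - conjM P * conjM L⁻¹ * P))
    ((-Complex.I) • (conjM P * conjM L⁻¹))
    (Complex.I • (conjM L⁻¹ * P)) (conjM L⁻¹)

/-- the Hermitian quadratic form of a matrix -/
def hqF (W : Matrix (Fin n ⊕ Fin n) (Fin n ⊕ Fin n) ℂ) (Z : Fin n ⊕ Fin n → ℂ) : ℂ :=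
  star Z ⬝ᵥ (W *ᵥ Z)

lemma star_mulVec_conj {m : Type*} [Fintype m] (M : Matrix m m ℂ) (x : m → ℂ) :
    star (M *ᵥ x) = conjM M *ᵥ star x := by
  funext i
  simp [Matrix.mulVec, dotProduct, conjM, star_sum]

lemma dot_mulVec_comm {m : Type*} [Fintype m] (M : Matrix m m ℂ) (x y : m → ℂ) :
    x ⬝ᵥ (M *ᵥ y) = (Mᵀ *ᵥ x) ⬝ᵥ y := by
  rw [Matrix.dotProduct_mulVec, Matrix.mulVec_transpose]

lemma star_dotProduct_eq {m : Type*} [Fintype m] (x y : m → ℂ) :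
    star (x ⬝ᵥ y) = star x ⬝ᵥ star y := by
  simp [dotProduct, star_sum]

lemma star_sum_elim (a b : Fin n → ℂ) :
    star (Sum.elim a b) = Sum.elim (star a) (star b) := by
  funext i; cases i <;> rfl

section identities

variable {L P : Matrix (Fin n) (Fin n) ℂ} (hL : L.PosDef) (hP : P.IsSymm)
include hL hP

lemma amat_eq :
    Amat L P = Matrix.fromBlocks (-(conjM L⁻¹ * P)) (Complex.I • conjM L⁻¹)
      (Complex.I • (L - conjM P * conjM L⁻¹ * P)) (-(conjM P * conjM L⁻¹)) := by
  rw [Amat, conjM_mul]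

lemma conj_levi_mul : conjM L * conjM L⁻¹ = 1 := by
  rw [← conjM_mul, Matrix.mul_nonsing_inv _ hL.det_pos.ne'.isUnit, conjM_one]

lemma conj_levi_mul' : conjM L⁻¹ * conjM L = 1 := by
  rw [← conjM_mul, Matrix.nonsing_inv_mul _ hL.det_pos.ne'.isUnit, conjM_one]

lemma conjM_levi : conjM L = Lᵀ := by
  have h : (conjM L)ᵀ = L := by
    rw [← conjTranspose_eq_conjM_transpose, hL.isHermitian.eq]
  calc conjM L = ((conjM L)ᵀ)ᵀ := (Matrix.transpose_transpose _).symm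
    _ = Lᵀ := by rw [h]

lemma levi_transpose : Lᵀ = conjM L := (conjM_levi hL hP).symm

lemma conj_levi_transpose : (conjM L)ᵀ = L := by
  rw [conjM_levi hL hP, Matrix.transpose_transpose]

lemma conj_inv_transpose : (conjM L⁻¹)ᵀ = L⁻¹ := by
  refine (Matrix.inv_eq_right_inv ?_).symm
  have h := congrArg Matrix.transpose (conj_levi_mul' hL hP)
  rwa [Matrix.transpose_mul, conj_levi_transpose hL hP, Matrix.transpose_one] at h

lemma conjP_transpose : (conjM P)ᵀ = conjM P := by
  rw [← conjM_transpose, hP.eq]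

lemma amat_mul_conj : Amat L P * conjM (Amat L P) = 1 := by
  have hdet := hL.det_pos.ne'.isUnit
  have hLi : L * L⁻¹ = 1 := Matrix.mul_nonsing_inv _ hdet
  have hiL : L⁻¹ * L = 1 := Matrix.nonsing_inv_mul _ hdet
  have hKc := conj_levi_mul hL hP
  have hcK := conj_levi_mul' hL hP
  have c1 : ∀ X : Matrix (Fin n) (Fin n) ℂ, L * (L⁻¹ * X) = X := fun X => by
    rw [← Matrix.mul_assoc, hLi, Matrix.one_mul]
  have c2 : ∀ X : Matrix (Fin n) (Fin n) ℂ, L⁻¹ * (L * X) = X := fun X => by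
    rw [← Matrix.mul_assoc, hiL, Matrix.one_mul]
  have c3 : ∀ X : Matrix (Fin n) (Fin n) ℂ, conjM L * (conjM L⁻¹ * X) = X := fun X => by
    rw [← Matrix.mul_assoc, hKc, Matrix.one_mul]
  have c4 : ∀ X : Matrix (Fin n) (Fin n) ℂ, conjM L⁻¹ * (conjM L * X) = X := fun X => by
    rw [← Matrix.mul_assoc, hcK, Matrix.one_mul]
  rw [amat_eq hL hP]
  simp only [conjM_fromBlocks, conjM_neg, conjM_smul, conjM_mul, conjM_sub, conjM_conjM,
    Complex.conj_I]
  rw [Matrix.fromBlocks_multiply, ← Matrix.fromBlocks_one]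
  refine Matrix.fromBlocks_inj.mpr ⟨?_, ?_, ?_, ?_⟩ <;>
  · simp only [neg_mul, mul_neg, neg_neg, smul_mul_assoc, mul_smul_comm, smul_smul, smul_neg,
      neg_smul, mul_sub, sub_mul, mul_assoc, smul_add, smul_sub, Complex.I_mul_I, one_smul,
      neg_one_smul, mul_one, one_mul, c1, c2, c3, c4, hLi, hiL, hKc, hcK]
    abel

lemma sp_amat_blocks : SpM n * Amat L P =
    Matrix.fromBlocks (-(Complex.I • (L - conjM P * conjM L⁻¹ * P))) (conjM P * conjM L⁻¹)
      (-(conjM L⁻¹ * P)) (Complex.I • conjM L⁻¹) := by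
  rw [amat_eq hL hP, SpM, Matrix.fromBlocks_multiply]
  refine Matrix.fromBlocks_inj.mpr ⟨?_, ?_, ?_, ?_⟩ <;>
    simp only [Matrix.zero_mul, Matrix.one_mul, Matrix.neg_mul, Matrix.one_mul, neg_neg,
      zero_add, add_zero, neg_one_mul]

lemma sp_amat : SpM n * Amat L P = Complex.I • Wm L P := by
  rw [sp_amat_blocks hL hP, Wm, Matrix.fromBlocks_smul]
  refine Matrix.fromBlocks_inj.mpr ⟨?_, ?_, ?_, ?_⟩ <;>
  · simp only [smul_neg, smul_smul, Complex.I_mul_I, neg_mul, mul_neg, neg_neg,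
      Complex.I_mul_I, one_smul, neg_one_smul, neg_smul]

lemma amat_symp : (Amat L P)ᵀ * (SpM n * Amat L P) = SpM n := by
  have hdet := hL.det_pos.ne'.isUnit
  have hLi : L * L⁻¹ = 1 := Matrix.mul_nonsing_inv _ hdet
  have hiL : L⁻¹ * L = 1 := Matrix.nonsing_inv_mul _ hdet
  have hKc := conj_levi_mul hL hP
  have hcK := conj_levi_mul' hL hP
  have c1 : ∀ X : Matrix (Fin n) (Fin n) ℂ, L * (L⁻¹ * X) = X := fun X => by
    rw [← Matrix.mul_assoc, hLi, Matrix.one_mul]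
  have c2 : ∀ X : Matrix (Fin n) (Fin n) ℂ, L⁻¹ * (L * X) = X := fun X => by
    rw [← Matrix.mul_assoc, hiL, Matrix.one_mul]
  have c3 : ∀ X : Matrix (Fin n) (Fin n) ℂ, conjM L * (conjM L⁻¹ * X) = X := fun X => by
    rw [← Matrix.mul_assoc, hKc, Matrix.one_mul]
  have c4 : ∀ X : Matrix (Fin n) (Fin n) ℂ, conjM L⁻¹ * (conjM L * X) = X := fun X => by
    rw [← Matrix.mul_assoc, hcK, Matrix.one_mul]
  rw [sp_amat_blocks hL hP, amat_eq hL hP, Matrix.fromBlocks_transpose]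
  simp only [Matrix.transpose_neg, Matrix.transpose_smul, Matrix.transpose_mul,
    Matrix.transpose_sub, conj_inv_transpose hL hP, conjP_transpose hL hP, hP.eq,
    levi_transpose hL hP]
  rw [Matrix.fromBlocks_multiply, SpM]
  refine Matrix.fromBlocks_inj.mpr ⟨?_, ?_, ?_, ?_⟩ <;>
  · simp only [neg_mul, mul_neg, neg_neg, smul_mul_assoc, mul_smul_comm, smul_smul, smul_neg,
      neg_smul, mul_sub, sub_mul, mul_assoc, smul_add, smul_sub, Complex.I_mul_I, one_smul,
      neg_one_smul, mul_one, one_mul, c1, c2, c3, c4, hLi, hiL, hKc, hcK]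
    abel

lemma conj_amat_mul : conjM (Amat L P) * Amat L P = 1 :=
  mul_eq_one_comm.mp (amat_mul_conj hL hP)

omit hL hP in
lemma conjM_zero {m : Type*} : conjM (0 : Matrix m m ℂ) = 0 := by
  ext i j; simp [conjM]

omit hL hP in
lemma conjM_spM : conjM (SpM n) = SpM n := by
  rw [SpM, conjM_fromBlocks, conjM_neg, conjM_one, conjM_zero]

lemma amatT_sp : (Amat L P)ᵀ * SpM n = SpM n * conjM (Amat L P) := by
  have h := congrArg (fun X => X * conjM (Amat L P)) (amat_symp hL hP)
  simp only [Matrix.mul_assoc] at h ⊢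
  rwa [amat_mul_conj hL hP, Matrix.mul_one] at h

lemma conj_amatT_sp : (conjM (Amat L P))ᵀ * SpM n = SpM n * Amat L P := by
  have h := congrArg conjM (amatT_sp hL hP)
  rwa [conjM_mul, conjM_mul, conjM_spM, conjM_conjM, conjM_transpose] at h

lemma wm_eq : Wm L P = (-Complex.I) • (SpM n * Amat L P) := by
  rw [sp_amat hL hP, smul_smul]
  have : -Complex.I * Complex.I = 1 := by
    rw [neg_mul, Complex.I_mul_I, neg_neg]
  rw [this, one_smul]

omit hL hP in
lemma spM_conjTranspose : (SpM n)ᴴ = -(SpM n) := by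
  ext i j
  cases i <;> cases j <;>
    simp [SpM, Matrix.fromBlocks, Matrix.conjTranspose_apply, Matrix.one_apply, apply_ite,
      eq_comm]

lemma wm_herm : (Wm L P)ᴴ = Wm L P := by
  rw [wm_eq hL hP, Matrix.conjTranspose_smul, Matrix.conjTranspose_mul, spM_conjTranspose]
  have h1 : (starRingEnd ℂ) (-Complex.I) = Complex.I := by simp
  rw [show star (-Complex.I) = Complex.I from h1]
  rw [conjTranspose_eq_conjM_transpose (Amat L P), Matrix.mul_neg, smul_neg, ← neg_smul]
  rw [conj_amatT_sp hL hP, ← wm_eq hL hP]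

lemma sandwich : (Amat L P)ᴴ * (conjM (Wm L P) * Amat L P) = -(Wm L P) := by
  have hc : conjM (Wm L P) = Complex.I • (SpM n * conjM (Amat L P)) := by
    rw [wm_eq hL hP, conjM_smul, conjM_mul, conjM_spM]
    simp
  rw [hc, conjTranspose_eq_conjM_transpose (Amat L P), smul_mul_assoc, mul_smul_comm,
    Matrix.mul_assoc (SpM n) (conjM (Amat L P)) (Amat L P), conj_amat_mul hL hP,
    Matrix.mul_one, conj_amatT_sp hL hP, sp_amat hL hP, smul_smul, Complex.I_mul_I,
    neg_one_smul]

end identities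

section hq

lemma hqF_im (W : Matrix (Fin n ⊕ Fin n) (Fin n ⊕ Fin n) ℂ) (hW : Wᴴ = W)
    (Z : Fin n ⊕ Fin n → ℂ) : (hqF W Z).im = 0 := by
  have h : (starRingEnd ℂ) (hqF W Z) = hqF W Z := by
    calc (starRingEnd ℂ) (hqF W Z)
        = star (star Z ⬝ᵥ (W *ᵥ Z)) := rfl
      _ = Z ⬝ᵥ star (W *ᵥ Z) := by rw [star_dotProduct_eq, star_star]
      _ = Z ⬝ᵥ (conjM W *ᵥ star Z) := by rw [star_mulVec_conj]
      _ = ((conjM W)ᵀ *ᵥ Z) ⬝ᵥ star Z := dot_mulVec_comm _ _ _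
      _ = (W *ᵥ Z) ⬝ᵥ star Z := by rw [← conjTranspose_eq_conjM_transpose, hW]
      _ = star Z ⬝ᵥ (W *ᵥ Z) := dotProduct_comm _ _
  exact Complex.conj_eq_iff_im.mp h

lemma hqF_star (W : Matrix (Fin n ⊕ Fin n) (Fin n ⊕ Fin n) ℂ) (x : Fin n ⊕ Fin n → ℂ) :
    hqF W (star x) = star (star x ⬝ᵥ (conjM W *ᵥ x)) := by
  simp only [hqF, star_dotProduct_eq, star_mulVec_conj, conjM_conjM, star_star]

lemma dot_sandwich (A N : Matrix (Fin n ⊕ Fin n) (Fin n ⊕ Fin n) ℂ) (Z : Fin n ⊕ Fin n → ℂ) :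
    star (A *ᵥ Z) ⬝ᵥ (N *ᵥ (A *ᵥ Z)) = star Z ⬝ᵥ ((Aᴴ * (N * A)) *ᵥ Z) := by
  calc star (A *ᵥ Z) ⬝ᵥ (N *ᵥ (A *ᵥ Z))
      = (conjM A *ᵥ star Z) ⬝ᵥ (N *ᵥ (A *ᵥ Z)) := by rw [star_mulVec_conj]
    _ = (N *ᵥ (A *ᵥ Z)) ⬝ᵥ (conjM A *ᵥ star Z) := dotProduct_comm _ _
    _ = ((conjM A)ᵀ *ᵥ (N *ᵥ (A *ᵥ Z))) ⬝ᵥ star Z := dot_mulVec_comm _ _ _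
    _ = star Z ⬝ᵥ ((conjM A)ᵀ *ᵥ (N *ᵥ (A *ᵥ Z))) := dotProduct_comm _ _
    _ = star Z ⬝ᵥ ((Aᴴ * (N * A)) *ᵥ Z) := by
        rw [Matrix.mulVec_mulVec, Matrix.mulVec_mulVec, ← conjTranspose_eq_conjM_transpose,
          Matrix.mul_assoc]

lemma dotC_eq (x y : Fin n → ℂ) : dotC x y = x ⬝ᵥ y := rfl

lemma weight_zero (L P : Matrix (Fin n) (Fin n) ℂ) : weight L P 0 = 0 := by
  simp [weight, dotC_eq]

section core

variable {L P : Matrix (Fin n) (Fin n) ℂ}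

lemma hq_block (hL : L.PosDef) (hP : P.IsSymm) (a b : Fin n → ℂ) :
    hqF (Wm L P) (Sum.elim a b) =
      -(star a ⬝ᵥ (L *ᵥ a)) + star (b + Complex.I • (P *ᵥ a)) ⬝ᵥ
        (conjM L⁻¹ *ᵥ (b + Complex.I • (P *ᵥ a))) := by
  have hmove : ∀ x y : Fin n → ℂ, (conjM P *ᵥ x) ⬝ᵥ y = x ⬝ᵥ (conjM P *ᵥ y) := by
    intro x y
    rw [dot_mulVec_comm, conjP_transpose hL hP]
  rw [hqF, Wm, Matrix.fromBlocks_mulVec, star_sum_elim]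
  simp only [Sum.elim_comp_inl, Sum.elim_comp_inr]
  rw [sumElim_dotProduct_sumElim]
  simp only [Matrix.sub_mulVec, Matrix.neg_mulVec, Matrix.smul_mulVec,
    ← Matrix.mulVec_mulVec, Matrix.mulVec_add, Matrix.mulVec_smul, star_add, star_smul,
    dotProduct_add, add_dotProduct, dotProduct_smul, smul_dotProduct, dotProduct_neg,
    neg_dotProduct, dotProduct_sub, sub_dotProduct, smul_eq_mul, star_mulVec_conj,
    Complex.star_def, Complex.conj_I, hmove]
  linear_combination (star a ⬝ᵥ conjM P *ᵥ conjM L⁻¹ *ᵥ P *ᵥ a) * Complex.I_sq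

lemma par (hL : L.PosDef) (hP : P.IsSymm) (a v : Fin n → ℂ) :
    4 * weight L P (((1:ℂ)/2) • (a + v)) + 4 * weight L P ((Complex.I/2) • (a - v)) =
      (star a ⬝ᵥ (L *ᵥ a)).re + (v ⬝ᵥ (conjM L *ᵥ star v)).re +
        2 * (v ⬝ᵥ (P *ᵥ a)).re := by
  have hconjhalf : star ((1:ℂ)/2) = (1:ℂ)/2 := by
    rw [Complex.star_def, Complex.conj_eq_iff_im]
    norm_num
  have hconjI2 : star (Complex.I/2) = -(Complex.I/2) := by
    rw [Complex.star_def]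
    simp [map_div₀, Complex.conj_I, neg_div, map_ofNat]
  have HL2 : 2 * ((L *ᵥ (((1:ℂ)/2) • (a + v))) ⬝ᵥ star (((1:ℂ)/2) • (a + v)) +
      (L *ᵥ ((Complex.I/2) • (a - v))) ⬝ᵥ star ((Complex.I/2) • (a - v))) =
      (L *ᵥ a) ⬝ᵥ star a + (L *ᵥ v) ⬝ᵥ star v := by
    simp only [Matrix.mulVec_smul, Matrix.mulVec_add, Matrix.mulVec_sub, star_smul, star_add,
      star_sub, smul_dotProduct, dotProduct_smul, add_dotProduct, dotProduct_add,
      sub_dotProduct, dotProduct_sub, smul_eq_mul, hconjhalf, hconjI2]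
    linear_combination (((L *ᵥ a) ⬝ᵥ star v + (L *ᵥ v) ⬝ᵥ star a - (L *ᵥ a) ⬝ᵥ star a
      - (L *ᵥ v) ⬝ᵥ star v) / 2) * Complex.I_sq
  have HP2 : 2 * ((P *ᵥ (((1:ℂ)/2) • (a + v))) ⬝ᵥ (((1:ℂ)/2) • (a + v)) +
      (P *ᵥ ((Complex.I/2) • (a - v))) ⬝ᵥ ((Complex.I/2) • (a - v))) =
      (P *ᵥ a) ⬝ᵥ v + (P *ᵥ v) ⬝ᵥ a := by
    simp only [Matrix.mulVec_smul, Matrix.mulVec_add, Matrix.mulVec_sub, smul_dotProduct,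
      dotProduct_smul, add_dotProduct, dotProduct_add, sub_dotProduct, dotProduct_sub,
      smul_eq_mul]
    linear_combination (((P *ᵥ a) ⬝ᵥ a - (P *ᵥ a) ⬝ᵥ v - (P *ᵥ v) ⬝ᵥ a
      + (P *ᵥ v) ⬝ᵥ v) / 2) * Complex.I_sq
  have rHL := congrArg Complex.re HL2
  have rHP := congrArg Complex.re HP2
  simp only [Complex.mul_re, Complex.add_re, Complex.re_ofNat, Complex.im_ofNat, zero_mul,
    sub_zero] at rHL rHP
  have e1 := congrArg Complex.re (dotProduct_comm (L *ᵥ a) (star a))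
  have e4 : (L *ᵥ v) ⬝ᵥ star v = v ⬝ᵥ (conjM L *ᵥ star v) := by
    rw [dot_mulVec_comm, conj_levi_transpose hL hP]
  have e4' := congrArg Complex.re e4
  have e5 : (P *ᵥ v) ⬝ᵥ a = (P *ᵥ a) ⬝ᵥ v := by
    rw [dotProduct_comm, dot_mulVec_comm, hP.eq]
  have e5' := congrArg Complex.re e5
  have e6 := congrArg Complex.re (dotProduct_comm v (P *ᵥ a))
  simp only [weight, dotC_eq]
  linarith [rHL, rHP, e1, e4', e5', e6]

lemma master (hL : L.PosDef) (hP : P.IsSymm) (a b v : Fin n → ℂ) :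
    (hqF (Wm L P) (Sum.elim a b)).re + 4 * weight L P (((1:ℂ)/2) • (a + v)) +
      4 * weight L P ((Complex.I/2) • (a - v)) + 2 * (b ⬝ᵥ v).im =
    (star ((-Complex.I) • star v - conjM L⁻¹ *ᵥ (b + Complex.I • (P *ᵥ a))) ⬝ᵥ
      (conjM L *ᵥ ((-Complex.I) • star v -
        conjM L⁻¹ *ᵥ (b + Complex.I • (P *ᵥ a))))).re := by
  set m := b + Complex.I • (P *ᵥ a) with hm
  have hstar_m : star (conjM L⁻¹ *ᵥ m) = L⁻¹ *ᵥ star m := by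
    rw [star_mulVec_conj, conjM_conjM]
  have hLcm : conjM L *ᵥ (conjM L⁻¹ *ᵥ m) = m := by
    rw [Matrix.mulVec_mulVec, conj_levi_mul hL hP, Matrix.one_mulVec]
  have f1 : (L⁻¹ *ᵥ star m) ⬝ᵥ m = star m ⬝ᵥ (conjM L⁻¹ *ᵥ m) := by
    rw [dot_mulVec_comm, conj_inv_transpose hL hP]
  have f2 : (L⁻¹ *ᵥ star m) ⬝ᵥ (conjM L *ᵥ star v) = star (v ⬝ᵥ m) := by
    calc (L⁻¹ *ᵥ star m) ⬝ᵥ (conjM L *ᵥ star v)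
        = star m ⬝ᵥ (conjM L⁻¹ *ᵥ (conjM L *ᵥ star v)) := by
          conv_rhs => rw [dot_mulVec_comm, conj_inv_transpose hL hP]
      _ = star m ⬝ᵥ star v := by
          rw [Matrix.mulVec_mulVec, conj_levi_mul' hL hP, Matrix.one_mulVec]
      _ = star (m ⬝ᵥ v) := (star_dotProduct_eq _ _).symm
      _ = star (v ⬝ᵥ m) := by rw [dotProduct_comm]
  have hsI : star (-Complex.I) = Complex.I := by simp
  have hRexp : star ((-Complex.I) • star v - conjM L⁻¹ *ᵥ m) ⬝ᵥ
      (conjM L *ᵥ ((-Complex.I) • star v - conjM L⁻¹ *ᵥ m)) =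
      v ⬝ᵥ (conjM L *ᵥ star v) - Complex.I * (v ⬝ᵥ m) + Complex.I * star (v ⬝ᵥ m) +
        star m ⬝ᵥ (conjM L⁻¹ *ᵥ m) := by
    rw [star_sub, star_smul, star_star, hsI, hstar_m, Matrix.mulVec_sub, Matrix.mulVec_smul,
      hLcm]
    simp only [sub_dotProduct, dotProduct_sub, smul_dotProduct, dotProduct_smul, smul_eq_mul]
    rw [f1, f2]
    linear_combination (-(v ⬝ᵥ (conjM L *ᵥ star v))) * Complex.I_sq
  have hre := congrArg Complex.re hRexp
  simp only [Complex.add_re, Complex.sub_re, Complex.mul_re, Complex.I_re, Complex.I_im,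
    Complex.star_def, Complex.conj_re, Complex.conj_im, zero_mul, one_mul, zero_sub,
    neg_neg, sub_neg_eq_add] at hre
  have hz : v ⬝ᵥ m = v ⬝ᵥ b + Complex.I * (v ⬝ᵥ (P *ᵥ a)) := by
    rw [hm]
    simp [dotProduct_add, dotProduct_smul, smul_eq_mul]
  have hzim := congrArg Complex.im hz
  simp only [Complex.add_im, Complex.mul_im, Complex.I_re, Complex.I_im, zero_mul, one_mul,
    add_zero, zero_add] at hzim
  have hbv := congrArg Complex.im (dotProduct_comm b v)
  have hqb := congrArg Complex.re (hq_block hL hP a b)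
  rw [← hm] at hqb
  simp only [Complex.add_re, Complex.neg_re] at hqb
  have hpar := par hL hP a v
  linarith [hre, hzim, hbv, hqb, hpar]

lemma key_lt {L₁ P₁ L₂ P₂ : Matrix (Fin n) (Fin n) ℂ}
    (hL₁ : L₁.PosDef) (hP₁ : P₁.IsSymm) (hL₂ : L₂.PosDef) (hP₂ : P₂.IsSymm)
    (hlt : ∀ x : Fin n → ℂ, x ≠ 0 → weight L₁ P₁ x < weight L₂ P₂ x)
    (Z : Fin n ⊕ Fin n → ℂ) (hZ : Z ≠ 0) :
    (hqF (Wm L₂ P₂) Z).re < (hqF (Wm L₁ P₁) Z).re := by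
  obtain ⟨a, b, hZe⟩ : ∃ a b, Sum.elim a b = Z := ⟨Z ∘ Sum.inl, Z ∘ Sum.inr,
    Sum.elim_comp_inl_inr Z⟩
  subst hZe
  set t2 := conjM L₂⁻¹ *ᵥ (b + Complex.I • (P₂ *ᵥ a)) with ht2
  set v := (-Complex.I) • star t2 with hv
  have hc0 : (-Complex.I) • star v - t2 = 0 := by
    rw [hv, star_smul, star_star]
    have : star (-Complex.I) = Complex.I := by simp
    rw [this, smul_smul]
    have h1 : -Complex.I * Complex.I = 1 := by rw [neg_mul, Complex.I_mul_I, neg_neg]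
    rw [h1, one_smul, sub_self]
  have heq := master hL₂ hP₂ a b v
  rw [← ht2, hc0] at heq
  simp only [star_zero, Matrix.mulVec_zero, dotProduct_zero, Complex.zero_re] at heq
  have hge := master hL₁ hP₁ a b v
  have hpos : 0 ≤ (star ((-Complex.I) • star v - conjM L₁⁻¹ *ᵥ (b + Complex.I • (P₁ *ᵥ a))) ⬝ᵥ
      (conjM L₁ *ᵥ ((-Complex.I) • star v -
        conjM L₁⁻¹ *ᵥ (b + Complex.I • (P₁ *ᵥ a))))).re := by
    have hLc : (conjM L₁).PosDef := by
      rw [conjM_levi hL₁ hP₁]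
      exact hL₁.transpose
    have := hLc.posSemidef.re_dotProduct_nonneg
      ((-Complex.I) • star v - conjM L₁⁻¹ *ᵥ (b + Complex.I • (P₁ *ᵥ a)))
    simpa using this
  have hle : ∀ x : Fin n → ℂ, weight L₁ P₁ x ≤ weight L₂ P₂ x := by
    intro x
    rcases eq_or_ne x 0 with h | h
    · rw [h, weight_zero, weight_zero]
    · exact (hlt x h).le
  have hnot : ¬(((1:ℂ)/2) • (a + v) = 0 ∧ (Complex.I/2) • (a - v) = 0) := by
    rintro ⟨hu, hw⟩
    have h12 : ((1:ℂ)/2) ≠ 0 := by norm_num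
    have hI2 : (Complex.I/2) ≠ 0 := by
      simp [div_eq_zero_iff, Complex.I_ne_zero]
    have h1 : a + v = 0 := by
      rcases smul_eq_zero.mp hu with h | h
      · exact absurd h h12
      · exact h
    have h2 : a - v = 0 := by
      rcases smul_eq_zero.mp hw with h | h
      · exact absurd h hI2
      · exact h
    have hva2 : a = v := sub_eq_zero.mp h2
    have ha : a = 0 := by
      have h3 : a + a = 0 := by
        nth_rewrite 2 [hva2]
        exact h1
      have h4 : (2:ℂ) • a = 0 := by
        rw [two_smul]
        exact h3
      rcases smul_eq_zero.mp h4 with h | h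
      · norm_num at h
      · exact h
    have hv0 : v = 0 := by rw [← hva2, ha]
    have ht20 : t2 = 0 := by
      rw [hv] at hv0
      rcases smul_eq_zero.mp hv0 with h | h
      · exact absurd h (by simp [Complex.I_ne_zero])
      · have := congrArg star h
        rwa [star_star, star_zero] at this
    have hm0 : b + Complex.I • (P₂ *ᵥ a) = 0 := by
      have := congrArg (fun x => conjM L₂ *ᵥ x) ht20
      simp only [Matrix.mulVec_zero] at this
      rwa [ht2, Matrix.mulVec_mulVec, conj_levi_mul hL₂ hP₂, Matrix.one_mulVec] at this
    have hb0 : b = 0 := by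
      rw [ha] at hm0
      simpa using hm0
    apply hZ
    rw [ha, hb0]
    funext i
    cases i <;> rfl
  have hstrict : 4 * weight L₁ P₁ (((1:ℂ)/2) • (a + v)) +
      4 * weight L₁ P₁ ((Complex.I/2) • (a - v)) <
      4 * weight L₂ P₂ (((1:ℂ)/2) • (a + v)) +
      4 * weight L₂ P₂ ((Complex.I/2) • (a - v)) := by
    rcases not_and_or.mp hnot with h | h
    · have h1 := hlt _ h
      have h2 := hle ((Complex.I/2) • (a - v))
      linarith
    · have h1 := hlt _ h
      have h2 := hle (((1:ℂ)/2) • (a + v))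
      linarith
  linarith [heq, hge, hpos, hstrict]

end core

end hq

end SpecAux

/-- if Φ₁ < Φ₂ away from 0 then Spec 𝐀_{Φ₂}⁻¹𝐀_{Φ₁} ⊆ (0,1) ∪ (1,∞). -/
theorem spectrum_in_pos_real (n : ℕ) (L₁ P₁ L₂ P₂ : Matrix (Fin n) (Fin n) ℂ)
    (hL₁ : L₁.PosDef) (hL₂ : L₂.PosDef) (hP₁ : P₁.IsSymm) (hP₂ : P₂.IsSymm)
    (hlt : ∀ x : Fin n → ℂ, x ≠ 0 → weight L₁ P₁ x < weight L₂ P₂ x) :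
    ∀ μ ∈ ((Amat L₂ P₂)⁻¹ * Amat L₁ P₁).charpoly.roots,
      μ.im = 0 ∧ 0 < μ.re ∧ μ.re ≠ 1 := by
  classical
  intro μ hμ
  have hA2c := SpecAux.amat_mul_conj hL₂ hP₂
  have hinv : (Amat L₂ P₂)⁻¹ = conjM (Amat L₂ P₂) := Matrix.inv_eq_right_inv hA2c
  rw [hinv] at hμ
  set M := conjM (Amat L₂ P₂) * Amat L₁ P₁ with hM
  have hroot : M.charpoly.IsRoot μ := by
    have hne : M.charpoly ≠ 0 := (Matrix.charpoly_monic M).ne_zero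
    exact (Polynomial.mem_roots hne).mp hμ
  have hdet0 : (μ • (1 : Matrix (Fin n ⊕ Fin n) (Fin n ⊕ Fin n) ℂ) - M).det = 0 := by
    have hev : M.charpoly.eval μ = (μ • 1 - M).det := by
      rw [Matrix.charpoly, ← Polynomial.coe_evalRingHom, RingHom.map_det]
      congr 1
      ext i j
      by_cases hij : i = j
      · subst hij
        simp [Matrix.charmatrix_apply_eq, Matrix.sub_apply, Matrix.smul_apply,
          Matrix.one_apply_eq]
      · simp [Matrix.charmatrix_apply_ne _ _ _ hij, Matrix.sub_apply, Matrix.smul_apply,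
          Matrix.one_apply_ne hij]
    rw [← hev]
    exact hroot
  obtain ⟨Z, hZ0, hZ⟩ := Matrix.exists_mulVec_eq_zero_iff.mpr hdet0
  have hMZ : M *ᵥ Z = μ • Z := by
    have h1 : (μ • (1 : Matrix (Fin n ⊕ Fin n) (Fin n ⊕ Fin n) ℂ) - M) *ᵥ Z =
        μ • Z - M *ᵥ Z := by
      rw [Matrix.sub_mulVec, Matrix.smul_mulVec, Matrix.one_mulVec]
    rw [h1] at hZ
    exact (sub_eq_zero.mp hZ).symm
  have hA1Z : Amat L₁ P₁ *ᵥ Z = μ • (Amat L₂ P₂ *ᵥ Z) := by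
    have h2 := congrArg (fun x => Amat L₂ P₂ *ᵥ x) hMZ
    rw [Matrix.mulVec_mulVec, hM, ← Matrix.mul_assoc, hA2c, Matrix.one_mul,
      Matrix.mulVec_smul] at h2
    exact h2
  have hW1 : SpecAux.Wm L₁ P₁ *ᵥ Z = μ • (SpecAux.Wm L₂ P₂ *ᵥ Z) := by
    rw [SpecAux.wm_eq hL₁ hP₁, SpecAux.wm_eq hL₂ hP₂, Matrix.smul_mulVec,
      Matrix.smul_mulVec, ← Matrix.mulVec_mulVec, ← Matrix.mulVec_mulVec, hA1Z,
      Matrix.mulVec_smul, smul_comm]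
  set α := SpecAux.hqF (SpecAux.Wm L₁ P₁) Z with hα
  set β := SpecAux.hqF (SpecAux.Wm L₂ P₂) Z with hβ
  have hαβ : α = μ * β := by
    rw [hα, hβ, SpecAux.hqF, SpecAux.hqF, hW1, dotProduct_smul, smul_eq_mul]
  have hαim : α.im = 0 := SpecAux.hqF_im _ (SpecAux.wm_herm hL₁ hP₁) Z
  have hβim : β.im = 0 := SpecAux.hqF_im _ (SpecAux.wm_herm hL₂ hP₂) Z
  set Y := star (Amat L₁ P₁ *ᵥ Z) with hY
  have hYne : Y ≠ 0 := by
    intro h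
    have h0 : Amat L₁ P₁ *ᵥ Z = 0 := by
      have := congrArg star h
      rwa [star_star, star_zero] at this
    apply hZ0
    have h2 := congrArg (fun x => conjM (Amat L₁ P₁) *ᵥ x) h0
    simp only [Matrix.mulVec_zero] at h2
    rwa [Matrix.mulVec_mulVec, SpecAux.conj_amat_mul hL₁ hP₁, Matrix.one_mulVec] at h2
  have hstarα : star α = α := by
    rw [Complex.star_def]
    exact Complex.conj_eq_iff_im.mpr hαim
  have hstarβ : star β = β := by
    rw [Complex.star_def]
    exact Complex.conj_eq_iff_im.mpr hβim
  have hY1 : SpecAux.hqF (SpecAux.Wm L₁ P₁) Y = -α := by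
    rw [hY, SpecAux.hqF_star, SpecAux.dot_sandwich, SpecAux.sandwich hL₁ hP₁,
      Matrix.neg_mulVec, dotProduct_neg, star_neg]
    rw [hα] at hstarα ⊢
    rw [SpecAux.hqF] at hstarα
    rw [hstarα]
    rfl
  have hY2 : SpecAux.hqF (SpecAux.Wm L₂ P₂) Y = -(μ * starRingEnd ℂ μ * β) := by
    rw [hY, SpecAux.hqF_star, hA1Z, star_smul, smul_dotProduct, Matrix.mulVec_smul,
      dotProduct_smul, SpecAux.dot_sandwich, SpecAux.sandwich hL₂ hP₂,
      Matrix.neg_mulVec, dotProduct_neg]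
    rw [hβ] at hstarβ
    rw [SpecAux.hqF] at hstarβ
    simp only [smul_eq_mul, star_mul', star_neg, star_star, hstarβ, Complex.star_def]
    rw [show star Z ⬝ᵥ (SpecAux.Wm L₂ P₂ *ᵥ Z) = β from rfl]
    simp only [Complex.conj_conj]
    ring
  have k1 := SpecAux.key_lt hL₁ hP₁ hL₂ hP₂ hlt Z hZ0
  have k2 := SpecAux.key_lt hL₁ hP₁ hL₂ hP₂ hlt Y hYne
  rw [← hα, ← hβ] at k1
  rw [hY1, hY2] at k2
  have e1 : α.re = μ.re * β.re := by
    rw [hαβ]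
    simp [Complex.mul_re, hβim]
  have e2 : α.im = μ.im * β.re := by
    rw [hαβ]
    simp [Complex.mul_im, hβim]
  have hbne : β.re ≠ 0 := by
    intro h
    rw [e1, h, mul_zero] at k1
    exact lt_irrefl 0 k1
  have hmi : μ.im = 0 := by
    have h3 : μ.im * β.re = 0 := by rw [← e2, hαim]
    rcases mul_eq_zero.mp h3 with h | h
    · exact h
    · exact absurd h hbne
  have e3 : (-(μ * starRingEnd ℂ μ * β)).re = -(μ.re * μ.re * β.re) := by
    simp only [Complex.neg_re, Complex.mul_re, Complex.mul_im, Complex.conj_re,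
      Complex.conj_im, hβim, hmi]
    ring
  have e4 : (-α).re = -(μ.re * β.re) := by
    rw [Complex.neg_re, e1]
  rw [e3, e4] at k2
  rw [e1] at k1
  refine ⟨hmi, ?_, ?_⟩
  · by_contra hc
    push_neg at hc
    nlinarith [k1, k2]
  · intro h1
    rw [h1, one_mul] at k1
    exact lt_irrefl _ k1

end
end

section
/- Let Φ : ℂⁿ → ℝ be a real-quadratic weight with positive definite Levi matrix L and pluriharmonic part matrix P, and for Y = (y, η) ∈ ℂⁿ × ℂⁿ define Φ_Y(x) = Φ(x − y) + Im((1/2) y·η − η·x). Then Φ_Y = Φ identically on ℂⁿ if and only if η = −i(P y + conj(L)·conj(y)) (equivalently, Y lies on the graph {(y, −2i ∂_x Φ(y)) : y ∈ ℂⁿ}). -/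
open MeasureTheory Real Matrix
open scoped ENNReal ComplexOrder

noncomputable section

lemma dotC_eq {n : ℕ} (x y : Fin n → ℂ) : dotC x y = x ⬝ᵥ y := rfl

lemma star_dot {n : ℕ} (a x : Fin n → ℂ) : star a ⬝ᵥ x = star (a ⬝ᵥ star x) := by
  simp [dotProduct, Pi.star_apply, star_sum, star_mul', mul_comm]

lemma conjM_mulVec_star {n : ℕ} (L : Matrix (Fin n) (Fin n) ℂ) (y : Fin n → ℂ) :
    (conjM L).mulVec (star y) = star (L.mulVec y) := by
  funext j
  simp [conjM, Matrix.mulVec, dotProduct, Pi.star_apply, star_sum, star_mul',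
    Matrix.map_apply]

lemma herm_dot {n : ℕ} {L : Matrix (Fin n) (Fin n) ℂ} (hH : L.IsHermitian) (u v : Fin n → ℂ) :
    (L *ᵥ u) ⬝ᵥ star v = star ((L *ᵥ v) ⬝ᵥ star u) := by
  simp only [Matrix.mulVec, dotProduct, Pi.star_apply, star_sum, star_mul',
    Finset.sum_mul, Finset.mul_sum, star_star]
  rw [Finset.sum_comm]
  refine Finset.sum_congr rfl fun j _ => Finset.sum_congr rfl fun k _ => ?_
  rw [← hH.apply k j]
  ring

lemma symm_dot {n : ℕ} {P : Matrix (Fin n) (Fin n) ℂ} (hP : P.IsSymm) (u v : Fin n → ℂ) :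
    (P *ᵥ u) ⬝ᵥ v = (P *ᵥ v) ⬝ᵥ u := by
  rw [dotProduct_comm, Matrix.dotProduct_mulVec, ← Matrix.mulVec_transpose, hP.eq]

lemma weight_sub {n : ℕ} {L P : Matrix (Fin n) (Fin n) ℂ} (hH : L.IsHermitian)
    (hP : P.IsSymm) (x y : Fin n → ℂ) :
    weight L P (x - y) = weight L P x - ((L *ᵥ y) ⬝ᵥ star x).re
      - ((P *ᵥ y) ⬝ᵥ x).re + weight L P y := by
  simp only [weight, dotC_eq, Matrix.mulVec_sub, star_sub, dotProduct_sub,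
    sub_dotProduct, Complex.sub_re]
  have h1 : ((L *ᵥ x) ⬝ᵥ star y).re = ((L *ᵥ y) ⬝ᵥ star x).re := by
    rw [herm_dot hH x y]; simp
  have h2 : ((P *ᵥ x) ⬝ᵥ y).re = ((P *ᵥ y) ⬝ᵥ x).re := by rw [symm_dot hP]
  rw [h1, h2]; ring

lemma dot_single {n : ℕ} (v : Fin n → ℂ) (j : Fin n) (c : ℂ) :
    v ⬝ᵥ Pi.single j c = v j * c := by
  simp [dotProduct, Pi.single_apply, mul_ite, Finset.sum_ite_eq']

lemma star_single {n : ℕ} (j : Fin n) (c : ℂ) :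
    star (Pi.single j c) = (Pi.single j (star c) : Fin n → ℂ) := by
  funext k; by_cases h : k = j <;> simp [Pi.single_apply, h]

/-- Φ_Y = Φ iff η = −i(P y + conj(L) conj(y)). -/
theorem shifted_weight_eq_iff (n : ℕ) (L P : Matrix (Fin n) (Fin n) ℂ)
    (hL : L.PosDef) (hP : P.IsSymm) (y η : Fin n → ℂ) :
    (∀ x, weight L P (x - y) + (1 / 2 * dotC y η - dotC η x).im = weight L P x) ↔
      η = -Complex.I • (P.mulVec y + (conjM L).mulVec (star y)) := by
  have hH := hL.1
  set a := L *ᵥ y with ha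
  set b := P *ᵥ y with hb
  have hw : weight L P y = 1/2 * ((a ⬝ᵥ star y).re + (b ⬝ᵥ y).re) := rfl
  have key : (∀ x, weight L P (x - y) + (1 / 2 * dotC y η - dotC η x).im = weight L P x) ↔
      ∀ x : Fin n → ℂ, (a ⬝ᵥ star x).re + (b ⬝ᵥ x).re + (η ⬝ᵥ x).im
        = weight L P y + ((1/2 : ℂ) * (y ⬝ᵥ η)).im := by
    refine forall_congr' fun x => ?_
    rw [weight_sub hH hP, dotC_eq, dotC_eq, Complex.sub_im, Complex.mul_im]
    constructor <;> intro hx <;> · linarith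
  rw [key, conjM_mulVec_star]
  constructor
  · intro h
    have h0 := h 0
    simp at h0
    have hx : ∀ x, (a ⬝ᵥ star x).re + (b ⬝ᵥ x).re + (η ⬝ᵥ x).im = 0 := by
      intro x; rw [h x]; simp [Complex.mul_im]; linarith
    funext j
    have e1 := hx (Pi.single j 1)
    have e2 := hx (Pi.single j Complex.I)
    rw [star_single, dot_single, dot_single, dot_single] at e1 e2
    simp [Complex.mul_re, Complex.mul_im] at e1 e2
    show η j = -Complex.I * (b j + star (a j))
    apply Complex.ext <;>
      simp [Complex.mul_re, Complex.mul_im, Complex.conj_re, Complex.conj_im] <;> linarith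
  · intro h x
    subst h
    rw [dotProduct_comm y]
    simp only [smul_dotProduct, add_dotProduct, star_dot, smul_eq_mul, hw]
    simp [Complex.mul_im, Complex.mul_re, Complex.add_im, Complex.add_re]
    ring


end
end

section
/- Let Φ : ℂⁿ → ℝ be a real-quadratic weight with positive definite Levi matrix L and pluriharmonic part matrix P, and let Λ_Φ = {(y, −i(P y + conj(L)·conj(y))) : y ∈ ℂⁿ} ⊆ ℂ^{2n}. Then conj(𝐀_Φ)·𝐀_Φ = I_{2n} (so 𝐀_Φ⁻¹ = conj(𝐀_Φ)), and Λ_Φ = {X ∈ ℂ^{2n} : conj(𝐀_Φ X) = X}; consequently X ↦ conj(𝐀_Φ X) is an antilinear involution of ℂ^{2n} whose fixed-point set is exactly Λ_Φ. -/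
open MeasureTheory Real Matrix
open scoped ENNReal ComplexOrder

noncomputable section

variable {m : Type*}

lemma conjM_mul [Fintype m] (A B : Matrix m m ℂ) : conjM (A * B) = conjM A * conjM B :=
  Matrix.map_mul

lemma conjM_conjM (A : Matrix m m ℂ) : conjM (conjM A) = A := by
  ext i j; simp [conjM]

lemma conjM_smul (c : ℂ) (A : Matrix m m ℂ) : conjM (c • A) = (starRingEnd ℂ c) • conjM A := by
  ext i j; simp [conjM]

lemma conjM_neg (A : Matrix m m ℂ) : conjM (-A) = -conjM A := by
  ext i j; simp [conjM]

lemma conjM_sub (A B : Matrix m m ℂ) : conjM (A - B) = conjM A - conjM B := by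
  ext i j; simp [conjM]

lemma conjM_one [DecidableEq m] : conjM (1 : Matrix m m ℂ) = 1 := by
  ext i j; simp [conjM, Matrix.one_apply, apply_ite]

lemma star_mulVec' [Fintype m] (A : Matrix m m ℂ) (x : m → ℂ) :
    star (A *ᵥ x) = conjM A *ᵥ (star x) := by
  ext i
  simp [conjM, Matrix.mulVec, dotProduct, map_sum]

lemma conjM_fromBlocks {k : Type*} (A B C D : Matrix k k ℂ) :
    conjM (Matrix.fromBlocks A B C D) =
      Matrix.fromBlocks (conjM A) (conjM B) (conjM C) (conjM D) :=
  Matrix.fromBlocks_map A B C D _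


/-- X ↦ conj(𝐀_Φ X) is an antilinear involution with fixed-point set Λ_Φ. -/
theorem Amat_involution_fixed_points (n : ℕ) (L P : Matrix (Fin n) (Fin n) ℂ)
    (hL : L.PosDef) (hP : P.IsSymm) :
    conjM (Amat L P) * Amat L P = 1 ∧
      {X : Fin n ⊕ Fin n → ℂ | star ((Amat L P).mulVec X) = X} =
        Set.range (fun y : Fin n → ℂ =>
          Sum.elim y (-Complex.I • (P.mulVec y + (conjM L).mulVec (star y)))) := by
  have hdet : IsUnit L.det := (Matrix.isUnit_iff_isUnit_det L).mp hL.isUnit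
  have h1 : L⁻¹ * L = 1 := Matrix.nonsing_inv_mul L hdet
  have h2 : L * L⁻¹ = 1 := Matrix.mul_nonsing_inv L hdet
  have h3 : conjM L⁻¹ * conjM L = 1 := by rw [← conjM_mul, h1, conjM_one]
  have h4 : conjM L * conjM L⁻¹ = 1 := by rw [← conjM_mul, h2, conjM_one]
  constructor
  · have h1' : ∀ X : Matrix (Fin n) (Fin n) ℂ, L⁻¹ * (L * X) = X := fun X => by
      rw [← Matrix.mul_assoc, h1, Matrix.one_mul]
    have h2' : ∀ X : Matrix (Fin n) (Fin n) ℂ, L * (L⁻¹ * X) = X := fun X => by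
      rw [← Matrix.mul_assoc, h2, Matrix.one_mul]
    have h3' : ∀ X : Matrix (Fin n) (Fin n) ℂ, conjM L⁻¹ * (conjM L * X) = X := fun X => by
      rw [← Matrix.mul_assoc, h3, Matrix.one_mul]
    have h4' : ∀ X : Matrix (Fin n) (Fin n) ℂ, conjM L * (conjM L⁻¹ * X) = X := fun X => by
      rw [← Matrix.mul_assoc, h4, Matrix.one_mul]
    rw [Amat, conjM_fromBlocks, Matrix.fromBlocks_multiply, ← Matrix.fromBlocks_one]
    simp only [conjM_neg, conjM_mul, conjM_smul, conjM_sub, conjM_conjM, Complex.conj_I]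
    rw [Matrix.fromBlocks_inj]
    refine ⟨?_, ?_, ?_, ?_⟩ <;>
      simp only [Matrix.neg_mul, Matrix.mul_neg, Matrix.smul_mul, Matrix.mul_smul, smul_smul,
        neg_smul, smul_neg, neg_neg, Complex.I_mul_I, neg_one_smul, one_smul,
        Matrix.mul_sub, Matrix.sub_mul, smul_sub, smul_add, sub_smul, add_smul,
        Matrix.mul_assoc, h1, h2, h3, h4, h1', h2', h3', h4', Matrix.mul_one, Matrix.one_mul,
        mul_neg, neg_mul, mul_one, one_mul] <;>
      abel
  · have g1 : ∀ x : Fin n → ℂ, L⁻¹ *ᵥ (L *ᵥ x) = x := fun x => by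
      rw [Matrix.mulVec_mulVec, h1, Matrix.one_mulVec]
    have g2 : ∀ x : Fin n → ℂ, L *ᵥ (L⁻¹ *ᵥ x) = x := fun x => by
      rw [Matrix.mulVec_mulVec, h2, Matrix.one_mulVec]
    have g3 : ∀ x : Fin n → ℂ, conjM L⁻¹ *ᵥ (conjM L *ᵥ x) = x := fun x => by
      rw [Matrix.mulVec_mulVec, h3, Matrix.one_mulVec]
    have g4 : ∀ x : Fin n → ℂ, conjM L *ᵥ (conjM L⁻¹ *ᵥ x) = x := fun x => by
      rw [Matrix.mulVec_mulVec, h4, Matrix.one_mulVec]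
    ext X
    simp only [Set.mem_setOf_eq, Set.mem_range]
    constructor
    · intro hX
      set u : Fin n → ℂ := X ∘ Sum.inl with hu
      set v : Fin n → ℂ := X ∘ Sum.inr with hv
      have hA : (Amat L P) *ᵥ X = Sum.elim (-(conjM L⁻¹ * P) *ᵥ u + (Complex.I • conjM L⁻¹) *ᵥ v)
          ((Complex.I • (L - conjM (P * L⁻¹) * P)) *ᵥ u + (-(conjM (P * L⁻¹))) *ᵥ v) := by
        rw [Amat, Matrix.fromBlocks_mulVec]
      have e1 : -(conjM L⁻¹ * P) *ᵥ u + (Complex.I • conjM L⁻¹) *ᵥ v = star u := by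
        funext j
        have h := congrFun hX (Sum.inl j)
        rw [hA] at h
        simpa [hu] using congrArg star h
      have hkey : v = -Complex.I • (P *ᵥ u + conjM L *ᵥ star u) := by
        have h := congrArg (fun w => ((-Complex.I) • conjM L) *ᵥ w) e1
        simp only [Matrix.mulVec_add, Matrix.smul_mulVec, Matrix.mulVec_smul,
          Matrix.neg_mulVec, ← Matrix.mulVec_mulVec, Matrix.mulVec_neg, g4, smul_smul,
          smul_neg, neg_smul, neg_neg, Complex.I_mul_I, one_smul, smul_add] at h ⊢
        -- h : I • (P *ᵥ u) + v = -(I • (conjM L *ᵥ star u)) (roughly)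
        rw [← h]
        abel
      refine ⟨u, ?_⟩
      funext j
      cases j with
      | inl j => rfl
      | inr j => exact congrFun hkey.symm j
    · rintro ⟨y, rfl⟩
      set v : Fin n → ℂ := -Complex.I • (P *ᵥ y + conjM L *ᵥ star y) with hv
      have hc : (Sum.elim y v : Fin n ⊕ Fin n → ℂ) ∘ Sum.inl = y := rfl
      have hc' : (Sum.elim y v : Fin n ⊕ Fin n → ℂ) ∘ Sum.inr = v := rfl
      rw [Amat, Matrix.fromBlocks_mulVec, hc, hc']
      have hstarv : star v = Complex.I • (conjM P *ᵥ star y + L *ᵥ y) := by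
        rw [hv]
        simp only [star_smul, star_add, star_mulVec', conjM_conjM, star_star, star_neg,
          Complex.star_def, Complex.conj_I, neg_neg]
      funext j
      cases j with
      | inl j =>
        have E1 : star (-(conjM L⁻¹ * P) *ᵥ y + (Complex.I • conjM L⁻¹) *ᵥ v) = y := by
          simp only [star_add, star_smul, star_neg, star_one, star_star, star_mulVec',
            conjM_neg, conjM_mul, conjM_smul, conjM_sub, conjM_conjM,
            Complex.star_def, Complex.conj_I, hstarv]
          simp only [← Matrix.mulVec_mulVec,
            Matrix.neg_mulVec, Matrix.sub_mulVec, Matrix.mulVec_add, Matrix.mulVec_sub,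
            Matrix.mulVec_smul, Matrix.smul_mulVec,
            Matrix.mulVec_neg, smul_smul, smul_add, smul_sub, smul_neg, neg_smul, neg_neg,
            neg_one_smul, mul_neg, neg_mul, Complex.I_mul_I, one_smul, g1, g2, g3, g4]
          abel
        simpa using congrFun E1 j
      | inr j =>
        have E2 : star ((Complex.I • (L - conjM (P * L⁻¹) * P)) *ᵥ y
            + (-(conjM (P * L⁻¹))) *ᵥ v) = v := by
          simp only [star_add, star_smul, star_neg, star_one, star_star, star_mulVec',
            conjM_neg, conjM_mul, conjM_smul, conjM_sub, conjM_conjM,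
            Complex.star_def, Complex.conj_I, hstarv]
          simp only [← Matrix.mulVec_mulVec,
            Matrix.neg_mulVec, Matrix.sub_mulVec, Matrix.mulVec_add, Matrix.mulVec_sub,
            Matrix.mulVec_smul, Matrix.smul_mulVec,
            Matrix.mulVec_neg, smul_smul, smul_add, smul_sub, smul_neg, neg_smul, neg_neg,
            neg_one_smul, mul_neg, neg_mul, Complex.I_mul_I, one_smul, g1, g2, g3, g4]
          rw [hv]
          simp only [smul_add, smul_smul, neg_smul, smul_neg, neg_neg, mul_neg, neg_mul,
            Complex.I_mul_I, one_smul]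
          abel
        simpa using congrFun E2 j


end
end

section
/- Let Φ₁, Φ₂ : ℂⁿ → ℝ be real-quadratic weights with positive definite Levi matrices. Then Φ₁(x) ≤ Φ₂(x) for all x ∈ ℂⁿ if and only if, for every X ∈ ℂ^{2n}, the complex number −i·(σ(𝐀_{Φ₂}X, conj(X)) − σ(𝐀_{Φ₁}X, conj(X))) is real and nonnegative. -/
open MeasureTheory Real Matrix
open scoped ENNReal ComplexOrder

noncomputable section

namespace LIP

variable {n : ℕ}

lemma dC (u v : Fin n → ℂ) : dotC u v = u ⬝ᵥ v := rfl

lemma dotC_comm (u v : Fin n → ℂ) : dotC u v = dotC v u := by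
  simp [dC, dotProduct_comm]

lemma dotC_shift (M : Matrix (Fin n) (Fin n) ℂ) (u v : Fin n → ℂ) :
    dotC (M *ᵥ u) v = dotC u (Mᵀ *ᵥ v) := by
  rw [dC, dC, dotProduct_comm, Matrix.dotProduct_mulVec, ← Matrix.mulVec_transpose,
    dotProduct_comm]

lemma dotC_starl (M : Matrix (Fin n) (Fin n) ℂ) (u v : Fin n → ℂ) :
    dotC (star v) (M *ᵥ u) = dotC u (Mᵀ *ᵥ star v) := by
  rw [dotC_comm, dotC_shift]

lemma star_dotC (u v : Fin n → ℂ) : star (dotC u v) = dotC (star u) (star v) := by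
  rw [dC, dC, Matrix.star_dotProduct_star, dotProduct_comm]

lemma conj_dotC (u v : Fin n → ℂ) :
    (starRingEnd ℂ) (dotC u v) = dotC (star u) (star v) := star_dotC u v

lemma star_mulVec' (M : Matrix (Fin n) (Fin n) ℂ) (v : Fin n → ℂ) :
    star (M *ᵥ v) = conjM M *ᵥ star v := by
  funext i; simp [Matrix.mulVec, dotProduct, conjM, mul_comm]

lemma conjM_mul (M N : Matrix (Fin n) (Fin n) ℂ) : conjM (M * N) = conjM M * conjM N :=
  Matrix.map_mul

lemma conjM_one : conjM (1 : Matrix (Fin n) (Fin n) ℂ) = 1 := by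
  simp [conjM]

lemma conjM_transpose (M : Matrix (Fin n) (Fin n) ℂ) : (conjM M)ᵀ = conjM Mᵀ := by
  simp [conjM, Matrix.transpose_map]

lemma conjM_conjM (M : Matrix (Fin n) (Fin n) ℂ) : conjM (conjM M) = M := by
  funext i j; simp [conjM]

lemma conjM_sub (M N : Matrix (Fin n) (Fin n) ℂ) : conjM (M - N) = conjM M - conjM N := by
  funext i j; simp [conjM]

lemma conjM_eq_transpose {M : Matrix (Fin n) (Fin n) ℂ} (h : M.IsHermitian) :
    conjM M = Mᵀ := by
  have h2 : Mᵀ.map (starRingEnd ℂ) = M := h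
  calc conjM M = (Mᵀᵀ).map (starRingEnd ℂ) := by rw [Matrix.transpose_transpose]; rfl
  _ = (Mᵀ.map (starRingEnd ℂ))ᵀ := by rw [Matrix.transpose_map]
  _ = Mᵀ := by rw [h2]

lemma dotC_add_l (u v w : Fin n → ℂ) : dotC (u + v) w = dotC u w + dotC v w := by
  simp [dC, add_dotProduct]
lemma dotC_add_r (u v w : Fin n → ℂ) : dotC u (v + w) = dotC u v + dotC u w := by
  simp [dC, dotProduct_add]
lemma dotC_sub_l (u v w : Fin n → ℂ) : dotC (u - v) w = dotC u w - dotC v w := by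
  simp [dC, sub_dotProduct]
lemma dotC_sub_r (u v w : Fin n → ℂ) : dotC u (v - w) = dotC u v - dotC u w := by
  simp [dC, dotProduct_sub]
lemma dotC_neg_l (u w : Fin n → ℂ) : dotC (-u) w = -dotC u w := by
  simp [dC, neg_dotProduct]
lemma dotC_neg_r (u w : Fin n → ℂ) : dotC u (-w) = -dotC u w := by
  simp [dC, dotProduct_neg]
lemma dotC_smul_l (c : ℂ) (u w : Fin n → ℂ) : dotC (c • u) w = c * dotC u w := by
  simp [dC, smul_dotProduct]
lemma dotC_smul_r (c : ℂ) (u w : Fin n → ℂ) : dotC u (c • w) = c * dotC u w := by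
  simp [dC, dotProduct_smul]

lemma psd_dotC {M : Matrix (Fin n) (Fin n) ℂ} (h : M.PosSemidef) (u : Fin n → ℂ) :
    (dotC (M *ᵥ u) (star u)).im = 0 ∧ 0 ≤ (dotC (M *ᵥ u) (star u)).re := by
  have h2 := h.dotProduct_mulVec_nonneg u
  rw [Complex.le_def] at h2
  have he : dotC (M *ᵥ u) (star u) = star u ⬝ᵥ M *ᵥ u := by rw [dC, dotProduct_comm]
  rw [he]
  exact ⟨h2.2.symm, by simpa using h2.1⟩

lemma herm_im {M : Matrix (Fin n) (Fin n) ℂ} (h : M.IsHermitian) (u : Fin n → ℂ) :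
    (dotC (M *ᵥ u) (star u)).im = 0 := by
  rw [← Complex.conj_eq_iff_im]
  have he : (starRingEnd ℂ) (dotC (M *ᵥ u) (star u)) = star (dotC (M *ᵥ u) (star u)) := rfl
  rw [he, star_dotC, star_star, star_mulVec', dotC_shift,
    show (conjM M)ᵀ = M by rw [conjM_eq_transpose h, Matrix.transpose_transpose], dotC_comm]

lemma symp_elim (a b c d : Fin n → ℂ) :
    symp (Sum.elim a b) (Sum.elim c d) = dotC b c - dotC d a := rfl

lemma star_elim (x ξ : Fin n → ℂ) :
    star (Sum.elim x ξ) = Sum.elim (star x) (star ξ) := by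
  funext i; cases i <;> rfl

lemma key1 (L P : Matrix (Fin n) (Fin n) ℂ) (hP : Pᵀ = P) (x ξ : Fin n → ℂ) :
    -Complex.I * symp ((Amat L P).mulVec (Sum.elim x ξ)) (star (Sum.elim x ξ))
      = dotC (L *ᵥ x) (star x)
        - dotC (conjM L⁻¹ *ᵥ (P *ᵥ x - Complex.I • ξ)) (star (P *ᵥ x - Complex.I • ξ)) := by
  have hPc : (conjM P)ᵀ = conjM P := by rw [conjM_transpose, hP]
  rw [star_elim, Amat, Matrix.fromBlocks_mulVec]
  simp only [Sum.elim_comp_inl, Sum.elim_comp_inr]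
  rw [symp_elim]
  simp only [conjM_mul, Matrix.neg_mulVec, Matrix.add_mulVec, Matrix.sub_mulVec,
    Matrix.smul_mulVec, Matrix.mulVec_add, Matrix.mulVec_sub, Matrix.mulVec_smul,
    star_add, star_sub, star_smul, star_star, star_mulVec',
    Complex.star_def, Complex.conj_I,
    dotC_add_l, dotC_add_r, dotC_sub_l, dotC_sub_r, dotC_neg_l, dotC_neg_r,
    dotC_smul_l, dotC_smul_r, neg_smul, smul_neg,
    dotC_shift, dotC_starl,
    Matrix.mulVec_mulVec, Matrix.transpose_mul, Matrix.transpose_transpose,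
    conjM_transpose, hP, hPc, Matrix.mul_assoc]
  linear_combination (dotC x ((P * (conjM L⁻¹ᵀ * conjM P)) *ᵥ star x)
    - dotC x (Lᵀ *ᵥ star x)) * Complex.I_sq

/-- the quadratic form 2(Φ₂ - Φ₁) as a complex number -/
def cdef (L₁ L₂ P₁ P₂ : Matrix (Fin n) (Fin n) ℂ) (u : Fin n → ℂ) : ℂ :=
  dotC ((L₂ - L₁) *ᵥ u) (star u)
    + (dotC ((P₂ - P₁) *ᵥ u) u + star (dotC ((P₂ - P₁) *ᵥ u) u)) / 2

lemma key2 (L₁ L₂ P₁ P₂ N₁ M₂ : Matrix (Fin n) (Fin n) ℂ)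
    (hP1 : P₁ᵀ = P₁) (hP2 : P₂ᵀ = P₂)
    (hL1T : L₁ᵀ = conjM L₁) (hL2T : L₂ᵀ = conjM L₂)
    (h1 : N₁ᵀ * L₁ = 1) (h2 : N₁ * conjM L₁ = 1) (hM2 : M₂ * conjM L₂ = 1)
    (x y : Fin n → ℂ) :
    dotC (L₂ *ᵥ x) (star x)
      - dotC (M₂ *ᵥ (conjM L₂ *ᵥ star y)) (star (conjM L₂ *ᵥ star y))
      - (dotC (L₁ *ᵥ x) (star x)
        - dotC (N₁ *ᵥ (conjM L₂ *ᵥ star y - (P₂ - P₁) *ᵥ x))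
            (star (conjM L₂ *ᵥ star y - (P₂ - P₁) *ᵥ x)))
    = dotC (N₁ *ᵥ (conjM L₂ *ᵥ star y - (P₂ - P₁) *ᵥ x - conjM L₁ *ᵥ star y))
        (star (conjM L₂ *ᵥ star y - (P₂ - P₁) *ᵥ x - conjM L₁ *ᵥ star y))
      + (cdef L₁ L₂ P₁ P₂ (x - y) + cdef L₁ L₂ P₁ P₂ (Complex.I • (x + y))) / 2 := by
  have hP1c : (conjM P₁)ᵀ = conjM P₁ := by rw [conjM_transpose, hP1]
  have hP2c : (conjM P₂)ᵀ = conjM P₂ := by rw [conjM_transpose, hP2]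
  have h1b : ∀ X : Matrix (Fin n) (Fin n) ℂ, N₁ᵀ * (L₁ * X) = X := fun X => by
    rw [← Matrix.mul_assoc, h1, Matrix.one_mul]
  have h2b : ∀ X : Matrix (Fin n) (Fin n) ℂ, N₁ * (conjM L₁ * X) = X := fun X => by
    rw [← Matrix.mul_assoc, h2, Matrix.one_mul]
  have hM2b : ∀ X : Matrix (Fin n) (Fin n) ℂ, M₂ * (conjM L₂ * X) = X := fun X => by
    rw [← Matrix.mul_assoc, hM2, Matrix.one_mul]
  have hsw1 : ∀ M : Matrix (Fin n) (Fin n) ℂ, dotC (star y) (M *ᵥ x) = dotC x (Mᵀ *ᵥ star y) :=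
    fun M => dotC_starl M x y
  have hsw2 : ∀ M : Matrix (Fin n) (Fin n) ℂ, dotC (star x) (M *ᵥ y) = dotC y (Mᵀ *ᵥ star x) :=
    fun M => dotC_starl M y x
  have hsw3 : ∀ M : Matrix (Fin n) (Fin n) ℂ, dotC (star x) (M *ᵥ x) = dotC x (Mᵀ *ᵥ star x) :=
    fun M => dotC_starl M x x
  have hsw4 : ∀ M : Matrix (Fin n) (Fin n) ℂ, dotC (star y) (M *ᵥ y) = dotC y (Mᵀ *ᵥ star y) :=
    fun M => dotC_starl M y y
  have hsw5 : ∀ M : Matrix (Fin n) (Fin n) ℂ,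
      dotC (star y) (M *ᵥ star x) = dotC (star x) (Mᵀ *ᵥ star y) := fun M => by
    rw [dotC_comm, dotC_shift]
  simp only [cdef, conjM_sub,
    Matrix.neg_mulVec, Matrix.add_mulVec, Matrix.sub_mulVec,
    Matrix.smul_mulVec, Matrix.mulVec_add, Matrix.mulVec_sub, Matrix.mulVec_smul,
    star_add, star_sub, star_smul, star_star, star_mulVec',
    Complex.star_def, Complex.conj_I, map_sub, map_add, _root_.map_mul, star_dotC, conj_dotC,
    dotC_add_l, dotC_add_r, dotC_sub_l, dotC_sub_r, dotC_neg_l, dotC_neg_r,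
    dotC_smul_l, dotC_smul_r, neg_smul, smul_neg,
    dotC_shift, hsw1, hsw2, hsw3, hsw4, hsw5,
    Matrix.mulVec_mulVec, Matrix.transpose_mul, Matrix.transpose_transpose,
    conjM_transpose, conjM_conjM, hP1, hP2, hP1c, hP2c, hL1T, hL2T,
    Matrix.mul_assoc, h1, h2, hM2, h1b, h2b, hM2b,
    Matrix.one_mulVec, Matrix.mul_one, Matrix.one_mul]
  have e1 : dotC y (P₁ *ᵥ x) = dotC x (P₁ *ᵥ y) := by
    rw [dotC_comm, dotC_shift, hP1]
  have e2 : dotC y (P₂ *ᵥ x) = dotC x (P₂ *ᵥ y) := by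
    rw [dotC_comm, dotC_shift, hP2]
  ring_nf
  simp only [Complex.I_sq]
  linear_combination (1/2 : ℂ) * e2 - (1/2 : ℂ) * e1

lemma key3 (L₁ L₂ P₁ P₂ N₁ M₂ : Matrix (Fin n) (Fin n) ℂ)
    (hP1 : P₁ᵀ = P₁) (hP2 : P₂ᵀ = P₂)
    (hL1T : L₁ᵀ = conjM L₁) (hL2T : L₂ᵀ = conjM L₂)
    (h2 : N₁ * conjM L₁ = 1) (hM2 : M₂ * conjM L₂ = 1) (hM2T : M₂ᵀ * L₂ = 1)
    (x : Fin n → ℂ) :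
    2 * cdef L₁ L₂ P₁ P₂ x
      = dotC (L₂ *ᵥ x) (star x)
          - dotC (M₂ *ᵥ ((P₂ - P₁) *ᵥ x - conjM L₁ *ᵥ star x))
              (star ((P₂ - P₁) *ᵥ x - conjM L₁ *ᵥ star x))
        - (dotC (L₁ *ᵥ x) (star x)
          - dotC (N₁ *ᵥ (-(conjM L₁ *ᵥ star x))) (star (-(conjM L₁ *ᵥ star x))))
        + dotC (M₂ *ᵥ ((P₂ - P₁) *ᵥ x + conjM (L₂ - L₁) *ᵥ star x))
            (star ((P₂ - P₁) *ᵥ x + conjM (L₂ - L₁) *ᵥ star x)) := by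
  have hP1c : (conjM P₁)ᵀ = conjM P₁ := by rw [conjM_transpose, hP1]
  have hP2c : (conjM P₂)ᵀ = conjM P₂ := by rw [conjM_transpose, hP2]
  have h2b : ∀ X : Matrix (Fin n) (Fin n) ℂ, N₁ * (conjM L₁ * X) = X := fun X => by
    rw [← Matrix.mul_assoc, h2, Matrix.one_mul]
  have hM2b : ∀ X : Matrix (Fin n) (Fin n) ℂ, M₂ * (conjM L₂ * X) = X := fun X => by
    rw [← Matrix.mul_assoc, hM2, Matrix.one_mul]
  have hM2Tb : ∀ X : Matrix (Fin n) (Fin n) ℂ, M₂ᵀ * (L₂ * X) = X := fun X => by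
    rw [← Matrix.mul_assoc, hM2T, Matrix.one_mul]
  have hsw3 : ∀ M : Matrix (Fin n) (Fin n) ℂ, dotC (star x) (M *ᵥ x) = dotC x (Mᵀ *ᵥ star x) :=
    fun M => dotC_starl M x x
  simp only [cdef, conjM_sub,
    Matrix.neg_mulVec, Matrix.add_mulVec, Matrix.sub_mulVec,
    Matrix.smul_mulVec, Matrix.mulVec_add, Matrix.mulVec_sub, Matrix.mulVec_smul,
    Matrix.mulVec_neg, Matrix.neg_mulVec,
    star_add, star_sub, star_neg, star_smul, star_star, star_mulVec',
    Complex.star_def, Complex.conj_I, map_sub, map_add, _root_.map_mul, star_dotC, conj_dotC,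
    dotC_add_l, dotC_add_r, dotC_sub_l, dotC_sub_r, dotC_neg_l, dotC_neg_r,
    dotC_smul_l, dotC_smul_r, neg_smul, smul_neg,
    dotC_shift, hsw3,
    Matrix.mulVec_mulVec, Matrix.transpose_mul, Matrix.transpose_transpose,
    conjM_transpose, conjM_conjM, hP1, hP2, hP1c, hP2c, hL1T, hL2T,
    Matrix.mul_assoc, h2, hM2, hM2T, h2b, hM2b, hM2Tb,
    Matrix.one_mulVec, Matrix.mul_one, Matrix.one_mul]
  ring_nf

lemma real_eq {z : ℂ} (h : z.im = 0) : z = (z.re : ℂ) := Complex.ext rfl (by simp [h])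

lemma final_im_re {T c₁ c₂ : ℂ} (hT : T.im = 0 ∧ 0 ≤ T.re) (h₁ : c₁.im = 0) (h₂ : c₂.im = 0)
    (r₁ : 0 ≤ c₁.re) (r₂ : 0 ≤ c₂.re) :
    (T + (c₁ + c₂) / 2).im = 0 ∧ 0 ≤ (T + (c₁ + c₂) / 2).re := by
  have e : T + (c₁ + c₂) / 2 = ((T.re + (c₁.re + c₂.re) / 2 : ℝ) : ℂ) := by
    rw [real_eq hT.1, real_eq h₁, real_eq h₂]
    simp only [Complex.ofReal_re]
    push_cast
    ring
  rw [e]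
  constructor
  · simp
  · simp only [Complex.ofReal_re]
    have := hT.2
    positivity

lemma cdef_im {L₁ L₂ P₁ P₂ : Matrix (Fin n) (Fin n) ℂ}
    (h : (L₂ - L₁).IsHermitian) (u : Fin n → ℂ) : (cdef L₁ L₂ P₁ P₂ u).im = 0 := by
  have h1 := herm_im h u
  have h2 : (z : ℂ) → ((z + star z) / 2).im = 0 := fun z => by
    rw [div_eq_mul_inv, Complex.mul_im]
    simp [Complex.star_def]
  rw [cdef, Complex.add_im, h1, h2]
  ring

lemma cdef_re (L₁ L₂ P₁ P₂ : Matrix (Fin n) (Fin n) ℂ) (u : Fin n → ℂ) :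
    (cdef L₁ L₂ P₁ P₂ u).re = 2 * (weight L₂ P₂ u - weight L₁ P₁ u) := by
  have h2 : (z : ℂ) → ((z + star z) / 2).re = z.re := fun z => by
    rw [div_eq_mul_inv, Complex.mul_re]
    simp [Complex.star_def]
    ring
  rw [cdef, Complex.add_re, h2, weight, weight,
    Matrix.sub_mulVec, Matrix.sub_mulVec, dotC_sub_l, dotC_sub_l, Complex.sub_re,
    Complex.sub_re]
  ring

end LIP

/-- Φ₁ ≤ Φ₂ iff the positivity condition on 𝐀_{Φ₁}, 𝐀_{Φ₂} holds. -/
theorem le_iff_positivity (n : ℕ) (L₁ P₁ L₂ P₂ : Matrix (Fin n) (Fin n) ℂ)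
    (hL₁ : L₁.PosDef) (hL₂ : L₂.PosDef) (hP₁ : P₁.IsSymm) (hP₂ : P₂.IsSymm) :
    (∀ x, weight L₁ P₁ x ≤ weight L₂ P₂ x) ↔
      ∀ X : Fin n ⊕ Fin n → ℂ,
        (-Complex.I * (symp ((Amat L₂ P₂).mulVec X) (star X) -
            symp ((Amat L₁ P₁).mulVec X) (star X))).im = 0 ∧
        0 ≤ (-Complex.I * (symp ((Amat L₂ P₂).mulVec X) (star X) -
            symp ((Amat L₁ P₁).mulVec X) (star X))).re := by
  have hdet₁ : IsUnit L₁.det := isUnit_iff_ne_zero.2 hL₁.det_pos.ne'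
  have hdet₂ : IsUnit L₂.det := isUnit_iff_ne_zero.2 hL₂.det_pos.ne'
  have hH₁ : L₁.IsHermitian := hL₁.1
  have hH₂ : L₂.IsHermitian := hL₂.1
  have hL1T : L₁ᵀ = conjM L₁ := (LIP.conjM_eq_transpose hH₁).symm
  have hL2T : L₂ᵀ = conjM L₂ := (LIP.conjM_eq_transpose hH₂).symm
  have hN₁eq : conjM L₁⁻¹ = (L₁⁻¹)ᵀ := LIP.conjM_eq_transpose hH₁.inv
  have hM₂eq : conjM L₂⁻¹ = (L₂⁻¹)ᵀ := LIP.conjM_eq_transpose hH₂.inv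
  have hN₁T : (conjM L₁⁻¹)ᵀ = L₁⁻¹ := by rw [hN₁eq, Matrix.transpose_transpose]
  have hM₂T : (conjM L₂⁻¹)ᵀ = L₂⁻¹ := by rw [hM₂eq, Matrix.transpose_transpose]
  have h1 : (conjM L₁⁻¹)ᵀ * L₁ = 1 := by rw [hN₁T]; exact Matrix.nonsing_inv_mul L₁ hdet₁
  have h2 : conjM L₁⁻¹ * conjM L₁ = 1 := by
    rw [← LIP.conjM_mul, Matrix.nonsing_inv_mul L₁ hdet₁, LIP.conjM_one]
  have hM2 : conjM L₂⁻¹ * conjM L₂ = 1 := by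
    rw [← LIP.conjM_mul, Matrix.nonsing_inv_mul L₂ hdet₂, LIP.conjM_one]
  have hM2T : (conjM L₂⁻¹)ᵀ * L₂ = 1 := by rw [hM₂T]; exact Matrix.nonsing_inv_mul L₂ hdet₂
  have hcM2 : conjM L₂ * conjM L₂⁻¹ = 1 := by
    rw [← LIP.conjM_mul, Matrix.mul_nonsing_inv L₂ hdet₂, LIP.conjM_one]
  have hN₁psd : (conjM L₁⁻¹).PosSemidef := by
    rw [hN₁eq]; exact (hL₁.inv.transpose).posSemidef
  have hM₂psd : (conjM L₂⁻¹).PosSemidef := by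
    rw [hM₂eq]; exact (hL₂.inv.transpose).posSemidef
  have hHd : (L₂ - L₁).IsHermitian := hH₂.sub hH₁
  constructor
  · intro hw X
    obtain ⟨x, ξ, rfl⟩ : ∃ x ξ, X = Sum.elim x ξ :=
      ⟨X ∘ Sum.inl, X ∘ Sum.inr, by funext i; cases i <;> rfl⟩
    set y := star (conjM L₂⁻¹ *ᵥ (P₂ *ᵥ x - Complex.I • ξ)) with hy
    have ew₂ : P₂ *ᵥ x - Complex.I • ξ = conjM L₂ *ᵥ star y := by
      rw [hy, star_star, Matrix.mulVec_mulVec, hcM2, Matrix.one_mulVec]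
    have ew₁ : P₁ *ᵥ x - Complex.I • ξ = conjM L₂ *ᵥ star y - (P₂ - P₁) *ᵥ x := by
      rw [← ew₂, Matrix.sub_mulVec]
      abel
    rw [mul_sub, LIP.key1 L₂ P₂ hP₂ x ξ, LIP.key1 L₁ P₁ hP₁ x ξ, ew₂, ew₁,
      LIP.key2 L₁ L₂ P₁ P₂ (conjM L₁⁻¹) (conjM L₂⁻¹) hP₁ hP₂ hL1T hL2T h1 h2 hM2 x y]
    refine LIP.final_im_re (LIP.psd_dotC hN₁psd _) (LIP.cdef_im hHd _) (LIP.cdef_im hHd _) ?_ ?_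
    · rw [LIP.cdef_re]
      have := hw (x - y)
      linarith
    · rw [LIP.cdef_re]
      have := hw (Complex.I • (x + y))
      linarith
  · intro h x
    set ξ₀ : Fin n → ℂ := (-Complex.I) • (P₁ *ᵥ x + conjM L₁ *ᵥ star x) with hξ₀
    have hIi : Complex.I • ξ₀ = P₁ *ᵥ x + conjM L₁ *ᵥ star x := by
      rw [hξ₀, smul_smul]
      simp [Complex.I_mul_I]
    have hww₁ : P₁ *ᵥ x - Complex.I • ξ₀ = -(conjM L₁ *ᵥ star x) := by
      rw [hIi]; abel
    have hww₂ : P₂ *ᵥ x - Complex.I • ξ₀ = (P₂ - P₁) *ᵥ x - conjM L₁ *ᵥ star x := by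
      rw [hIi, Matrix.sub_mulVec]; abel
    have hD := h (Sum.elim x ξ₀)
    rw [mul_sub, LIP.key1 L₂ P₂ hP₂ x ξ₀, LIP.key1 L₁ P₁ hP₁ x ξ₀, hww₁, hww₂] at hD
    have hk3 := LIP.key3 L₁ L₂ P₁ P₂ (conjM L₁⁻¹) (conjM L₂⁻¹) hP₁ hP₂ hL1T hL2T h2 hM2 hM2T x
    have hs := LIP.psd_dotC hM₂psd ((P₂ - P₁) *ᵥ x + conjM (L₂ - L₁) *ᵥ star x)
    have hre := congrArg Complex.re hk3
    rw [Complex.add_re, Complex.mul_re] at hre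
    simp only [Complex.re_ofNat, Complex.im_ofNat, LIP.cdef_re] at hre
    have hcr := LIP.cdef_re L₁ L₂ P₁ P₂ x
    have h2r := hD.2
    have hsr := hs.2
    nlinarith [hre, h2r, hsr]


end
end

section
/- Let Φ₁, Φ₂ : ℂⁿ → ℝ be real-quadratic weights with positive definite Levi matrices such that Φ₁(x) < Φ₂(x) for all x ∈ ℂⁿ \ {0}. Then for every X ∈ ℂ^{2n} with X ≠ 0, the complex number −i·(σ(𝐀_{Φ₂}X, conj(X)) − σ(𝐀_{Φ₁}X, conj(X))) is real and strictly positive. -/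
open MeasureTheory Real Matrix
open scoped ENNReal ComplexOrder

noncomputable section

/-! ### Auxiliary lemmas -/

namespace StrictPosAux

variable {n : ℕ}

lemma conjM_mulVec (A : Matrix (Fin n) (Fin n) ℂ) (v : Fin n → ℂ) :
    conjM A *ᵥ star v = star (A *ᵥ v) := by
  funext j
  simp [conjM, Matrix.mulVec, dotProduct, Matrix.map_apply, star_sum, mul_comm]

lemma mulVec_dot (A : Matrix (Fin n) (Fin n) ℂ) (v u : Fin n → ℂ) :
    (A *ᵥ v) ⬝ᵥ u = v ⬝ᵥ (Aᵀ *ᵥ u) := by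
  rw [dotProduct_comm, dotProduct_mulVec, dotProduct_comm, ← mulVec_transpose]

lemma conj_dot (u v : Fin n → ℂ) :
    (starRingEnd ℂ) (u ⬝ᵥ v) = star u ⬝ᵥ star v := by
  simp [dotProduct, map_sum, mul_comm]

lemma conjM_conjM (A : Matrix (Fin n) (Fin n) ℂ) : conjM (conjM A) = A := by
  funext i j; simp [conjM]

lemma conjM_mul (A B : Matrix (Fin n) (Fin n) ℂ) : conjM (A * B) = conjM A * conjM B :=
  Matrix.map_mul

lemma conjM_one : conjM (1 : Matrix (Fin n) (Fin n) ℂ) = 1 :=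
  Matrix.map_one _ (map_zero _) (map_one _)

lemma conjM_sub (A B : Matrix (Fin n) (Fin n) ℂ) : conjM (A - B) = conjM A - conjM B := by
  funext i j; simp [conjM, Matrix.sub_apply, Matrix.map_apply]

lemma conjM_transpose (A : Matrix (Fin n) (Fin n) ℂ) : (conjM A)ᵀ = Aᴴ := by
  funext i j; simp [conjM, Matrix.conjTranspose_apply]

lemma isHermitian_conjM {A : Matrix (Fin n) (Fin n) ℂ} (hA : A.IsHermitian) :
    (conjM A).IsHermitian := by
  have : conjM A = Aᵀ := by
    funext i j
    have := hA.apply j i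
    simp [conjM, Matrix.map_apply, Matrix.transpose_apply, ← this]
  rw [this]
  exact hA.transpose

lemma quad_im (A : Matrix (Fin n) (Fin n) ℂ) (hA : A.IsHermitian) (v : Fin n → ℂ) :
    ((A *ᵥ v) ⬝ᵥ star v).im = 0 := by
  rw [← Complex.conj_eq_iff_im]
  calc (starRingEnd ℂ) ((A *ᵥ v) ⬝ᵥ star v)
      = star (A *ᵥ v) ⬝ᵥ v := by rw [conj_dot, star_star]
    _ = (conjM A *ᵥ star v) ⬝ᵥ v := by rw [conjM_mulVec]
    _ = star v ⬝ᵥ (Aᴴ *ᵥ v) := by rw [mulVec_dot, conjM_transpose]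
    _ = (A *ᵥ v) ⬝ᵥ star v := by rw [hA.eq, dotProduct_comm]

lemma quad_conjM (A : Matrix (Fin n) (Fin n) ℂ) (v : Fin n → ℂ) :
    (conjM A *ᵥ v) ⬝ᵥ star v = (starRingEnd ℂ) ((A *ᵥ star v) ⬝ᵥ v) := by
  rw [conj_dot, ← conjM_mulVec, star_star]

lemma symp_elim (u v a b : Fin n → ℂ) :
    symp (Sum.elim u v) (Sum.elim a b) = v ⬝ᵥ a - b ⬝ᵥ u := rfl

lemma star_elim (x ξ : Fin n → ℂ) :
    star (Sum.elim x ξ) = Sum.elim (star x) (star ξ) := by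
  funext j; cases j <;> rfl

lemma stepA (L P M : Matrix (Fin n) (Fin n) ℂ) (hP : P.IsSymm) (x ξ : Fin n → ℂ) :
    -Complex.I * symp ((Matrix.fromBlocks (-(M * P)) (Complex.I • M)
        (Complex.I • (L - conjM P * M * P)) (-(conjM P * M))) *ᵥ (Sum.elim x ξ))
        (star (Sum.elim x ξ)) =
    (L *ᵥ x) ⬝ᵥ star x - (M *ᵥ (P *ᵥ x - Complex.I • ξ)) ⬝ᵥ star (P *ᵥ x - Complex.I • ξ) := by
  rw [Matrix.fromBlocks_mulVec, star_elim, symp_elim]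
  have hPc : ∀ u : Fin n → ℂ, (conjM P *ᵥ u) ⬝ᵥ star x = u ⬝ᵥ star (P *ᵥ x) := by
    intro u
    rw [mulVec_dot, ← conjM_mulVec]
    congr 1
    rw [conjM_transpose, Matrix.conjTranspose, hP.eq]
    rfl
  simp only [Matrix.neg_mulVec, Matrix.sub_mulVec, Matrix.smul_mulVec,
    Matrix.mulVec_smul, ← Matrix.mulVec_mulVec, Matrix.mulVec_add, Matrix.add_mulVec,
    Matrix.mulVec_sub, star_sub, star_smul, Complex.star_def, Complex.conj_I,
    dotProduct_add, add_dotProduct, dotProduct_sub, sub_dotProduct,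
    dotProduct_smul, smul_dotProduct, dotProduct_neg, neg_dotProduct, smul_eq_mul,
    neg_smul, neg_neg, Sum.elim_comp_inl, Sum.elim_comp_inr]
  rw [hPc, hPc]
  rw [dotProduct_comm (star ξ) (M *ᵥ (P *ᵥ x)), dotProduct_comm (star ξ) (M *ᵥ ξ)]
  ring_nf
  simp only [Complex.I_sq]
  ring

lemma core (L₁ P₁ L₂ P₂ : Matrix (Fin n) (Fin n) ℂ)
    (hL₁ : L₁.PosDef) (hL₂ : L₂.PosDef) (hP₁ : P₁.IsSymm) (hP₂ : P₂.IsSymm)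
    (hlt : ∀ v : Fin n → ℂ, v ≠ 0 → weight L₁ P₁ v < weight L₂ P₂ v)
    (x ξ : Fin n → ℂ) (hne : ¬(x = 0 ∧ ξ = 0)) :
    (((L₂ *ᵥ x) ⬝ᵥ star x
        - (conjM L₂⁻¹ *ᵥ (P₂ *ᵥ x - Complex.I • ξ)) ⬝ᵥ star (P₂ *ᵥ x - Complex.I • ξ))
      - ((L₁ *ᵥ x) ⬝ᵥ star x
        - (conjM L₁⁻¹ *ᵥ (P₁ *ᵥ x - Complex.I • ξ)) ⬝ᵥ star (P₁ *ᵥ x - Complex.I • ξ))).im = 0 ∧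
    0 < (((L₂ *ᵥ x) ⬝ᵥ star x
        - (conjM L₂⁻¹ *ᵥ (P₂ *ᵥ x - Complex.I • ξ)) ⬝ᵥ star (P₂ *ᵥ x - Complex.I • ξ))
      - ((L₁ *ᵥ x) ⬝ᵥ star x
        - (conjM L₁⁻¹ *ᵥ (P₁ *ᵥ x - Complex.I • ξ)) ⬝ᵥ star (P₁ *ᵥ x - Complex.I • ξ))).re := by
  set z₁ : Fin n → ℂ := P₁ *ᵥ x - Complex.I • ξ with hz₁
  set z₂ : Fin n → ℂ := P₂ *ᵥ x - Complex.I • ξ with hz₂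
  set M₁ : Matrix (Fin n) (Fin n) ℂ := conjM L₁⁻¹ with hM₁
  set M₂ : Matrix (Fin n) (Fin n) ℂ := conjM L₂⁻¹ with hM₂
  set w : Fin n → ℂ := -(M₂ *ᵥ z₂) with hwdef
  set s : Fin n → ℂ := star w with hsdef
  set y : Fin n → ℂ := w + M₁ *ᵥ z₁ with hydef
  -- invertibility facts
  have hdet₁ : IsUnit L₁.det := (Matrix.isUnit_iff_isUnit_det _).mp hL₁.isUnit
  have hdet₂ : IsUnit L₂.det := (Matrix.isUnit_iff_isUnit_det _).mp hL₂.isUnit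
  have hinv₁ : L₁ * L₁⁻¹ = 1 := Matrix.mul_nonsing_inv _ hdet₁
  have hinv₂ : L₂ * L₂⁻¹ = 1 := Matrix.mul_nonsing_inv _ hdet₂
  have hcM₁ : conjM L₁ * M₁ = 1 := by rw [hM₁, ← conjM_mul, hinv₁, conjM_one]
  have hcM₂ : conjM L₂ * M₂ = 1 := by rw [hM₂, ← conjM_mul, hinv₂, conjM_one]
  have hb₁ : ∀ v : Fin n → ℂ, conjM L₁ *ᵥ (M₁ *ᵥ v) = v := by
    intro v; rw [Matrix.mulVec_mulVec, hcM₁, Matrix.one_mulVec]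
  have hb₂ : ∀ v : Fin n → ℂ, conjM L₂ *ᵥ (M₂ *ᵥ v) = v := by
    intro v; rw [Matrix.mulVec_mulVec, hcM₂, Matrix.one_mulVec]
  have hw' : conjM L₂ *ᵥ w = -z₂ := by rw [hwdef, Matrix.mulVec_neg, hb₂]
  -- square-completion identities
  have hI1 : -((M₂ *ᵥ z₂) ⬝ᵥ star z₂)
      = (conjM L₂ *ᵥ w) ⬝ᵥ star w + w ⬝ᵥ star z₂ + z₂ ⬝ᵥ star w := by
    have hMw : M₂ *ᵥ z₂ = -w := by rw [hwdef, neg_neg]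
    rw [hw', hMw]
    simp only [neg_dotProduct, dotProduct_neg]
    ring
  have hHerm₁ : L₁ᴴ = L₁ := hL₁.isHermitian.eq
  have hcross : (conjM L₁ *ᵥ w) ⬝ᵥ star (M₁ *ᵥ z₁) = w ⬝ᵥ star z₁ := by
    have h1 : star (M₁ *ᵥ z₁) = L₁⁻¹ *ᵥ star z₁ := by
      have h2 : conjM M₁ = L₁⁻¹ := by rw [hM₁, conjM_conjM]
      rw [← h2, conjM_mulVec]
    rw [h1, mulVec_dot, conjM_transpose, hHerm₁, Matrix.mulVec_mulVec, hinv₁,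
      Matrix.one_mulVec]
  have hM₁herm : M₁.IsHermitian := isHermitian_conjM hL₁.isHermitian.inv
  have hlast : z₁ ⬝ᵥ star (M₁ *ᵥ z₁) = (M₁ *ᵥ z₁) ⬝ᵥ star z₁ := by
    calc z₁ ⬝ᵥ star (M₁ *ᵥ z₁)
        = (starRingEnd ℂ) (star z₁ ⬝ᵥ (M₁ *ᵥ z₁)) := by rw [conj_dot, star_star]
      _ = (starRingEnd ℂ) ((M₁ *ᵥ z₁) ⬝ᵥ star z₁) := by rw [dotProduct_comm]
      _ = (M₁ *ᵥ z₁) ⬝ᵥ star z₁ :=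
          Complex.conj_eq_iff_im.mpr (quad_im _ hM₁herm _)
  have hI2 : (M₁ *ᵥ z₁) ⬝ᵥ star z₁
      = (conjM L₁ *ᵥ y) ⬝ᵥ star y - (conjM L₁ *ᵥ w) ⬝ᵥ star w
        - w ⬝ᵥ star z₁ - z₁ ⬝ᵥ star w := by
    have hexp : (conjM L₁ *ᵥ y) ⬝ᵥ star y
        = (conjM L₁ *ᵥ w) ⬝ᵥ star w + (conjM L₁ *ᵥ w) ⬝ᵥ star (M₁ *ᵥ z₁)
          + (conjM L₁ *ᵥ (M₁ *ᵥ z₁)) ⬝ᵥ star w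
          + (conjM L₁ *ᵥ (M₁ *ᵥ z₁)) ⬝ᵥ star (M₁ *ᵥ z₁) := by
      rw [hydef]
      simp only [Matrix.mulVec_add, star_add, dotProduct_add, add_dotProduct]
      ring
    rw [hexp, hcross, hb₁, hlast]
    ring
  -- difference pieces
  have hQx : ((L₂ - L₁) *ᵥ x) ⬝ᵥ star x
      = (L₂ *ᵥ x) ⬝ᵥ star x - (L₁ *ᵥ x) ⬝ᵥ star x := by
    rw [Matrix.sub_mulVec, sub_dotProduct]
  have hQw : (conjM (L₂ - L₁) *ᵥ w) ⬝ᵥ star w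
      = (conjM L₂ *ᵥ w) ⬝ᵥ star w - (conjM L₁ *ᵥ w) ⬝ᵥ star w := by
    rw [conjM_sub, Matrix.sub_mulVec, sub_dotProduct]
  have hQwconj : (conjM (L₂ - L₁) *ᵥ w) ⬝ᵥ star w
      = (starRingEnd ℂ) (((L₂ - L₁) *ᵥ s) ⬝ᵥ star s) := by
    rw [quad_conjM]
    congr 1
    rw [hsdef, star_star]
  have hzdiff : z₂ - z₁ = (P₂ - P₁) *ᵥ x := by
    rw [hz₁, hz₂, Matrix.sub_mulVec]; abel
  have hc1 : w ⬝ᵥ star z₂ - w ⬝ᵥ star z₁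
      = (starRingEnd ℂ) (((P₂ - P₁) *ᵥ x) ⬝ᵥ s) := by
    rw [conj_dot, hsdef, star_star, ← dotProduct_sub, ← star_sub, hzdiff,
      dotProduct_comm]
  have hc2 : z₂ ⬝ᵥ star w - z₁ ⬝ᵥ star w = ((P₂ - P₁) *ᵥ x) ⬝ᵥ s := by
    rw [← sub_dotProduct, hzdiff, hsdef]
  -- the master identity
  have master : ((L₂ *ᵥ x) ⬝ᵥ star x - (M₂ *ᵥ z₂) ⬝ᵥ star z₂)
      - ((L₁ *ᵥ x) ⬝ᵥ star x - (M₁ *ᵥ z₁) ⬝ᵥ star z₁)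
      = (conjM L₁ *ᵥ y) ⬝ᵥ star y + ((L₂ - L₁) *ᵥ x) ⬝ᵥ star x
        + (starRingEnd ℂ) (((L₂ - L₁) *ᵥ s) ⬝ᵥ star s)
        + (((P₂ - P₁) *ᵥ x) ⬝ᵥ s + (starRingEnd ℂ) (((P₂ - P₁) *ᵥ x) ⬝ᵥ s)) := by
    linear_combination hI1 + hI2 - hQx - hQw + hQwconj + hc1 + hc2
  rw [master]
  -- Hermitian facts for imaginary parts
  have hΔLherm : (L₂ - L₁).IsHermitian := hL₂.isHermitian.sub hL₁.isHermitian
  have i1 : ((conjM L₁ *ᵥ y) ⬝ᵥ star y).im = 0 :=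
    quad_im _ (isHermitian_conjM hL₁.isHermitian) y
  have i2 : (((L₂ - L₁) *ᵥ x) ⬝ᵥ star x).im = 0 := quad_im _ hΔLherm x
  have i3 : (((L₂ - L₁) *ᵥ s) ⬝ᵥ star s).im = 0 := quad_im _ hΔLherm s
  constructor
  · simp [Complex.add_im, Complex.conj_im, i1, i2, i3]
  -- real part: positivity
  have r0 : 0 ≤ ((conjM L₁ *ᵥ y) ⬝ᵥ star y).re := by
    rw [quad_conjM, Complex.conj_re]
    have hp := hL₁.posSemidef.dotProduct_mulVec_nonneg (star y)
    rw [star_star] at hp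
    rw [dotProduct_comm]
    exact (Complex.le_def.mp hp).1
  -- weight difference facts
  have hF : ∀ v : Fin n → ℂ, v ≠ 0 →
      0 < (((L₂ - L₁) *ᵥ v) ⬝ᵥ star v).re + (((P₂ - P₁) *ᵥ v) ⬝ᵥ v).re := by
    intro v hv
    have h := hlt v hv
    have e1 : (((L₂ - L₁) *ᵥ v) ⬝ᵥ star v).re
        = ((L₂ *ᵥ v) ⬝ᵥ star v).re - ((L₁ *ᵥ v) ⬝ᵥ star v).re := by
      rw [Matrix.sub_mulVec, sub_dotProduct, Complex.sub_re]
    have e2 : (((P₂ - P₁) *ᵥ v) ⬝ᵥ v).re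
        = ((P₂ *ᵥ v) ⬝ᵥ v).re - ((P₁ *ᵥ v) ⬝ᵥ v).re := by
      rw [Matrix.sub_mulVec, sub_dotProduct, Complex.sub_re]
    have hw1 : weight L₁ P₁ v
        = (1 / 2) * (((L₁ *ᵥ v) ⬝ᵥ star v).re + ((P₁ *ᵥ v) ⬝ᵥ v).re) := rfl
    have hw2 : weight L₂ P₂ v
        = (1 / 2) * (((L₂ *ᵥ v) ⬝ᵥ star v).re + ((P₂ *ᵥ v) ⬝ᵥ v).re) := rfl
    rw [hw1, hw2] at h
    rw [e1, e2]
    linarith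
  have hG : ∀ v : Fin n → ℂ, v ≠ 0 →
      0 < (((L₂ - L₁) *ᵥ v) ⬝ᵥ star v).re - (((P₂ - P₁) *ᵥ v) ⬝ᵥ v).re := by
    intro v hv
    have hiv : Complex.I • v ≠ 0 := smul_ne_zero Complex.I_ne_zero hv
    have h := hF (Complex.I • v) hiv
    have e3 : ((L₂ - L₁) *ᵥ (Complex.I • v)) ⬝ᵥ star (Complex.I • v)
        = ((L₂ - L₁) *ᵥ v) ⬝ᵥ star v := by
      rw [Matrix.mulVec_smul, star_smul, smul_dotProduct, dotProduct_smul,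
        smul_eq_mul, smul_eq_mul, Complex.star_def, Complex.conj_I]
      ring_nf
      simp only [Complex.I_sq]
      ring
    have e4 : ((P₂ - P₁) *ᵥ (Complex.I • v)) ⬝ᵥ (Complex.I • v)
        = -(((P₂ - P₁) *ᵥ v) ⬝ᵥ v) := by
      rw [Matrix.mulVec_smul, smul_dotProduct, dotProduct_smul, smul_eq_mul,
        smul_eq_mul]
      ring_nf
      simp only [Complex.I_sq]
      ring
    rw [e3, e4, Complex.neg_re] at h
    linarith
  have hFnn : ∀ v : Fin n → ℂ,
      0 ≤ (((L₂ - L₁) *ᵥ v) ⬝ᵥ star v).re + (((P₂ - P₁) *ᵥ v) ⬝ᵥ v).re := by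
    intro v
    by_cases hv : v = 0
    · simp [hv]
    · exact le_of_lt (hF v hv)
  have hGnn : ∀ v : Fin n → ℂ,
      0 ≤ (((L₂ - L₁) *ᵥ v) ⬝ᵥ star v).re - (((P₂ - P₁) *ᵥ v) ⬝ᵥ v).re := by
    intro v
    by_cases hv : v = 0
    · simp [hv]
    · exact le_of_lt (hG v hv)
  -- parallelogram and polarization
  have hswap : ((P₂ - P₁) *ᵥ s) ⬝ᵥ x = ((P₂ - P₁) *ᵥ x) ⬝ᵥ s := by
    have hΔPsymm : (P₂ - P₁)ᵀ = P₂ - P₁ := by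
      rw [Matrix.transpose_sub, hP₁.eq, hP₂.eq]
    rw [mulVec_dot, hΔPsymm, dotProduct_comm]
  have hpar : ((L₂ - L₁) *ᵥ (x + s)) ⬝ᵥ star (x + s)
        + ((L₂ - L₁) *ᵥ (x - s)) ⬝ᵥ star (x - s)
      = 2 * (((L₂ - L₁) *ᵥ x) ⬝ᵥ star x) + 2 * (((L₂ - L₁) *ᵥ s) ⬝ᵥ star s) := by
    simp only [Matrix.mulVec_add, Matrix.mulVec_sub, star_add, star_sub,
      dotProduct_add, dotProduct_sub, add_dotProduct, sub_dotProduct]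
    ring
  have hpol : ((P₂ - P₁) *ᵥ (x + s)) ⬝ᵥ (x + s) - ((P₂ - P₁) *ᵥ (x - s)) ⬝ᵥ (x - s)
      = 4 * (((P₂ - P₁) *ᵥ x) ⬝ᵥ s) := by
    simp only [Matrix.mulVec_add, Matrix.mulVec_sub, dotProduct_add,
      dotProduct_sub, add_dotProduct, sub_dotProduct]
    linear_combination 2 * hswap
  have rpar := congrArg Complex.re hpar
  have rpol := congrArg Complex.re hpol
  simp only [Complex.add_re, Complex.sub_re, Complex.mul_re, Complex.re_ofNat,
    Complex.im_ofNat, Complex.ofReal_re, zero_mul, sub_zero] at rpar rpol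
  -- nondegeneracy: not both x+s and x-s vanish
  have hnotboth : ¬(x + s = 0 ∧ x - s = 0) := by
    rintro ⟨h1, h2⟩
    have hx0 : x = 0 := by
      funext i
      have h3 := congrFun h1 i
      have h4 := congrFun h2 i
      simp only [Pi.add_apply, Pi.sub_apply, Pi.zero_apply] at h3 h4 ⊢
      linear_combination (h3 + h4) / 2
    have hs0 : s = 0 := by
      funext i
      have h3 := congrFun h1 i
      have h4 := congrFun h2 i
      simp only [Pi.add_apply, Pi.sub_apply, Pi.zero_apply] at h3 h4 ⊢
      linear_combination (h3 - h4) / 2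
    have hw0 : w = 0 := by
      rw [← star_star w, ← hsdef, hs0, star_zero]
    have hz20 : z₂ = 0 := by
      have := hw'
      rw [hw0, Matrix.mulVec_zero] at this
      simpa [neg_eq_zero] using this.symm
    have hξ0 : ξ = 0 := by
      rw [hz₂, hx0, Matrix.mulVec_zero, zero_sub, neg_eq_zero] at hz20
      exact (smul_eq_zero.mp hz20).resolve_left Complex.I_ne_zero
    exact hne ⟨hx0, hξ0⟩
  -- final assembly of the real part
  have key : 0 < (((L₂ - L₁) *ᵥ x) ⬝ᵥ star x).re + (((L₂ - L₁) *ᵥ s) ⬝ᵥ star s).re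
      + 2 * (((P₂ - P₁) *ᵥ x) ⬝ᵥ s).re := by
    by_cases h1 : x + s = 0
    · have h2 : x - s ≠ 0 := fun h => hnotboth ⟨h1, h⟩
      have := hG (x - s) h2
      have h3 := hFnn (x + s)
      linarith
    · have := hF (x + s) h1
      have h3 := hGnn (x - s)
      linarith
  simp only [Complex.add_re, Complex.conj_re]
  linarith

end StrictPosAux

/-- strict inequality of weights gives strict positivity. -/
theorem lt_implies_strict_positivity (n : ℕ) (L₁ P₁ L₂ P₂ : Matrix (Fin n) (Fin n) ℂ)
    (hL₁ : L₁.PosDef) (hL₂ : L₂.PosDef) (hP₁ : P₁.IsSymm) (hP₂ : P₂.IsSymm)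
    (hlt : ∀ x : Fin n → ℂ, x ≠ 0 → weight L₁ P₁ x < weight L₂ P₂ x) :
    ∀ X : Fin n ⊕ Fin n → ℂ, X ≠ 0 →
      (-Complex.I * (symp ((Amat L₂ P₂).mulVec X) (star X) -
          symp ((Amat L₁ P₁).mulVec X) (star X))).im = 0 ∧
      0 < (-Complex.I * (symp ((Amat L₂ P₂).mulVec X) (star X) -
          symp ((Amat L₁ P₁).mulVec X) (star X))).re := by
  intro X hX
  open StrictPosAux in
  have hXel : X = Sum.elim (X ∘ Sum.inl) (X ∘ Sum.inr) := by
    funext j; cases j <;> rfl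
  have hAmat : ∀ L P : Matrix (Fin n) (Fin n) ℂ,
      Amat L P = Matrix.fromBlocks (-(conjM L⁻¹ * P)) (Complex.I • conjM L⁻¹)
        (Complex.I • (L - conjM P * conjM L⁻¹ * P)) (-(conjM P * conjM L⁻¹)) := by
    intro L P
    unfold Amat
    rw [StrictPosAux.conjM_mul]
  have hA : ∀ (L P : Matrix (Fin n) (Fin n) ℂ), P.IsSymm →
      -Complex.I * symp ((Amat L P).mulVec X) (star X)
      = (L *ᵥ (X ∘ Sum.inl)) ⬝ᵥ star (X ∘ Sum.inl)
        - (conjM L⁻¹ *ᵥ (P *ᵥ (X ∘ Sum.inl) - Complex.I • (X ∘ Sum.inr)))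
          ⬝ᵥ star (P *ᵥ (X ∘ Sum.inl) - Complex.I • (X ∘ Sum.inr)) := by
    intro L P hP
    conv_lhs => rw [hAmat, hXel]
    exact StrictPosAux.stepA L P (conjM L⁻¹) hP (X ∘ Sum.inl) (X ∘ Sum.inr)
  have hsplit : -Complex.I * (symp ((Amat L₂ P₂).mulVec X) (star X) -
        symp ((Amat L₁ P₁).mulVec X) (star X))
      = (-Complex.I * symp ((Amat L₂ P₂).mulVec X) (star X))
        - (-Complex.I * symp ((Amat L₁ P₁).mulVec X) (star X)) := by ring
  rw [hsplit, hA L₂ P₂ hP₂, hA L₁ P₁ hP₁]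
  have hne : ¬(X ∘ Sum.inl = 0 ∧ X ∘ Sum.inr = 0) := by
    rintro ⟨h1, h2⟩
    apply hX
    funext j
    cases j with
    | inl j => exact congrFun h1 j
    | inr j => exact congrFun h2 j
  exact StrictPosAux.core L₁ P₁ L₂ P₂ hL₁ hL₂ hP₁ hP₂ hlt (X ∘ Sum.inl) (X ∘ Sum.inr) hne

end
end
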